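/- arXiv:2305.05361 — 7 statements merged into one kernel-verified Lean document; each statement's English description precedes it below -/
import Mathlib

section
/- In a category C with a strict factorization system (E,M), the subcategory E satisfies the relative right cancellation law: if r is a morphism of C and s a morphism of E such that the composite rs lies in E, then r lies in E. -/
open CategoryTheory

universe v u

/-- A strict factorization system `(E,M)` on a category `C`: a pair of wide subcategories
(given as morphism properties containing identities and closed under composition) such that
every morphism factors uniquely as `m ∘ e` with `e ∈ E`, `m ∈ M`. -/
structure StrictFactorizationSystem (C : Type u) [Category.{v} C] where
  E : MorphismProperty C
  M : MorphismProperty C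
  E_id : ∀ X : C, E (𝟙 X)
  M_id : ∀ X : C, M (𝟙 X)
  E_comp : ∀ {X Y Z : C} (f : X ⟶ Y) (g : Y ⟶ Z), E f → E g → E (f ≫ g)
  M_comp : ∀ {X Y Z : C} (f : X ⟶ Y) (g : Y ⟶ Z), M f → M g → M (f ≫ g)
  fac : ∀ {X Y : C} (f : X ⟶ Y),
    ∃! p : Σ Z : C, (X ⟶ Z) × (Z ⟶ Y), E p.2.1 ∧ M p.2.2 ∧ p.2.1 ≫ p.2.2 = f


/-- Relative right cancellation for `E`: if `s ∈ E` and `r ∘ s ∈ E` then `r ∈ E`. -/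
theorem E_right_cancel (C : Type u) [Category.{v} C] (S : StrictFactorizationSystem C)
    {X Y Z : C} (s : X ⟶ Y) (r : Y ⟶ Z) (hs : S.E s) (hrs : S.E (s ≫ r)) : S.E r := by
  obtain ⟨⟨W, e, m⟩, ⟨he, hm, hfac⟩, _⟩ := S.fac r
  obtain ⟨q, _, huq⟩ := S.fac (s ≫ r)
  have h1 : (⟨W, s ≫ e, m⟩ : Σ Z' : C, (X ⟶ Z') × (Z' ⟶ Z)) = q :=
    huq _ ⟨S.E_comp _ _ hs he, hm, by rw [Category.assoc, hfac]⟩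
  have h2 : (⟨Z, s ≫ r, 𝟙 Z⟩ : Σ Z' : C, (X ⟶ Z') × (Z' ⟶ Z)) = q :=
    huq _ ⟨hrs, S.M_id Z, Category.comp_id _⟩
  have h := h1.trans h2.symm
  obtain ⟨rfl, h⟩ := Sigma.mk.inj_iff.mp h
  have hm1 : m = 𝟙 W := congrArg Prod.snd (eq_of_heq h)
  rw [← hfac, hm1, Category.comp_id]
  exact he
end

section
/- Every strict factorization system on a groupoid is a variance: if (E,M) is a strict factorization system on a groupoid G, then (M,E) is also a strict factorization system on G. -/
open CategoryTheory

universe v u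

lemma sfs_E_inv {G : Type u} [Groupoid.{v} G] (S : StrictFactorizationSystem G)
    {X Y : G} (e : X ⟶ Y) (he : S.E e) : S.E (inv e) := by
  obtain ⟨⟨Z, e', m'⟩, ⟨he', hm', hfac⟩, _⟩ := S.fac (inv e)
  dsimp only at he' hm' hfac
  obtain ⟨q, _, huniq⟩ := S.fac (𝟙 X)
  have h1 : (⟨Z, e ≫ e', m'⟩ : Σ Z : G, (X ⟶ Z) × (Z ⟶ X)) = q := by
    apply huniq
    refine ⟨S.E_comp _ _ he he', hm', ?_⟩
    simp only [Category.assoc]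
    rw [hfac]; simp
  have h2 : (⟨X, 𝟙 X, 𝟙 X⟩ : Σ Z : G, (X ⟶ Z) × (Z ⟶ X)) = q := by
    apply huniq
    exact ⟨S.E_id X, S.M_id X, Category.id_comp _⟩
  have h := h1.trans h2.symm
  injection h with hZ hpe
  subst hZ
  have hpe' := eq_of_heq hpe
  simp only [Prod.mk.injEq] at hpe'
  obtain ⟨-, hm'1⟩ := hpe'
  rw [hm'1, Category.comp_id] at hfac
  rw [← hfac]; exact he'

lemma sfs_M_inv {G : Type u} [Groupoid.{v} G] (S : StrictFactorizationSystem G)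
    {X Y : G} (m : X ⟶ Y) (hm : S.M m) : S.M (inv m) := by
  obtain ⟨⟨Z, e', m'⟩, ⟨he', hm', hfac⟩, _⟩ := S.fac (inv m)
  dsimp only at he' hm' hfac
  obtain ⟨q, _, huniq⟩ := S.fac (𝟙 Y)
  have h1 : (⟨Z, e', m' ≫ m⟩ : Σ Z : G, (Y ⟶ Z) × (Z ⟶ Y)) = q := by
    apply huniq
    refine ⟨he', S.M_comp _ _ hm' hm, ?_⟩
    rw [← Category.assoc, hfac]; simp
  have h2 : (⟨Y, 𝟙 Y, 𝟙 Y⟩ : Σ Z : G, (Y ⟶ Z) × (Z ⟶ Y)) = q := by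
    apply huniq
    exact ⟨S.E_id Y, S.M_id Y, Category.id_comp _⟩
  have h := h1.trans h2.symm
  injection h with hZ hpe
  subst hZ
  have hpe' := eq_of_heq hpe
  simp only [Prod.mk.injEq] at hpe'
  obtain ⟨he'1, -⟩ := hpe'
  rw [he'1, Category.id_comp] at hfac
  rw [← hfac]; exact hm'

/-- Every strict factorization system `(E,M)` on a groupoid is a variance:
`(M,E)` is also a strict factorization system. -/
theorem groupoid_sfs_is_variance (G : Type u) [Groupoid.{v} G]
    (S : StrictFactorizationSystem G) :
    ∀ {X Y : G} (f : X ⟶ Y),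
      ∃! p : Σ Z : G, (X ⟶ Z) × (Z ⟶ Y), S.M p.2.1 ∧ S.E p.2.2 ∧ p.2.1 ≫ p.2.2 = f := by
  intro X Y f
  obtain ⟨⟨Z, e, m⟩, ⟨he, hm, hfac⟩, huniq⟩ := S.fac (inv f)
  dsimp only at he hm hfac
  refine ⟨⟨Z, inv m, inv e⟩, ⟨sfs_M_inv S m hm, sfs_E_inv S e he, ?_⟩, ?_⟩
  · rw [← IsIso.inv_comp]; simp only [hfac, IsIso.inv_inv]
  · rintro ⟨Z', m', e'⟩ ⟨hm', he', hfac'⟩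
    dsimp only at hm' he' hfac' ⊢
    have h : (⟨Z', inv e', inv m'⟩ : Σ Z : G, (Y ⟶ Z) × (Z ⟶ X)) = ⟨Z, e, m⟩ := by
      apply huniq
      refine ⟨sfs_E_inv S e' he', sfs_M_inv S m' hm', ?_⟩
      dsimp only
      rw [← IsIso.inv_comp]; simp only [hfac']
    injection h with hZ hpe
    subst hZ
    have hpe' := eq_of_heq hpe
    simp only [Prod.mk.injEq] at hpe'
    obtain ⟨h1, h2⟩ := hpe'
    have hm2 : m' = inv m := by rw [← h2, IsIso.inv_inv]
    have he2 : e' = inv e := by rw [← h1, IsIso.inv_inv]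
    subst hm2; subst he2
    rfl
end

section
/- Decomposition theorem: Let C be a category with a variance (E,M), and let G : E → D and H : M → D be (covariant) functors that agree on objects and satisfy H(f^m)∘G(f^e) = G(f_e)∘H(f_m) for each morphism f of C. Then there exists a unique functor F : C → D restricting to G on E and to H on M; explicitly F(f) = H(f^m)∘G(f^e). -/
open CategoryTheory

universe v u v₂ u₂

/-- A variance `(E,M)` on a category `C`: wide subcategories such that both `(E,M)` and
`(M,E)` are strict factorization systems.  The chosen terminating factorization of `f` is
`f = tm f ∘ te f` (i.e. `f = f^m ∘ f^e`) through the object `tObj f` (the terminating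
object `f_t`), and the chosen starting factorization is `f = se f ∘ sm f`
(i.e. `f = f_e ∘ f_m`) through `sObj f` (the starting object `f_s`). -/
structure Variance (C : Type u) [Category.{v} C] where
  E : MorphismProperty C
  M : MorphismProperty C
  E_id : ∀ X : C, E (𝟙 X)
  M_id : ∀ X : C, M (𝟙 X)
  E_comp : ∀ {X Y Z : C} (f : X ⟶ Y) (g : Y ⟶ Z), E f → E g → E (f ≫ g)
  M_comp : ∀ {X Y Z : C} (f : X ⟶ Y) (g : Y ⟶ Z), M f → M g → M (f ≫ g)
  tObj : ∀ {X Y : C}, (X ⟶ Y) → C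
  te : ∀ {X Y : C} (f : X ⟶ Y), X ⟶ tObj f
  tm : ∀ {X Y : C} (f : X ⟶ Y), tObj f ⟶ Y
  te_mem : ∀ {X Y : C} (f : X ⟶ Y), E (te f)
  tm_mem : ∀ {X Y : C} (f : X ⟶ Y), M (tm f)
  t_fac : ∀ {X Y : C} (f : X ⟶ Y), te f ≫ tm f = f
  t_uniq : ∀ {X Y : C} (f : X ⟶ Y) (Z : C) (e : X ⟶ Z) (m : Z ⟶ Y),
      E e → M m → e ≫ m = f →
      (⟨Z, e, m⟩ : Σ Z : C, (X ⟶ Z) × (Z ⟶ Y)) = ⟨tObj f, te f, tm f⟩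
  sObj : ∀ {X Y : C}, (X ⟶ Y) → C
  sm : ∀ {X Y : C} (f : X ⟶ Y), X ⟶ sObj f
  se : ∀ {X Y : C} (f : X ⟶ Y), sObj f ⟶ Y
  sm_mem : ∀ {X Y : C} (f : X ⟶ Y), M (sm f)
  se_mem : ∀ {X Y : C} (f : X ⟶ Y), E (se f)
  s_fac : ∀ {X Y : C} (f : X ⟶ Y), sm f ≫ se f = f
  s_uniq : ∀ {X Y : C} (f : X ⟶ Y) (Z : C) (m : X ⟶ Z) (e : Z ⟶ Y),
      M m → E e → m ≫ e = f →
      (⟨Z, m, e⟩ : Σ Z : C, (X ⟶ Z) × (Z ⟶ Y)) = ⟨sObj f, sm f, se f⟩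

namespace Variance

variable {C : Type u} [Category.{v} C] (V : Variance C)

lemma tObj_of_E {X Y : C} (f : X ⟶ Y) (h : V.E f) : V.tObj f = Y :=
  (congrArg Sigma.fst (V.t_uniq f Y f (𝟙 Y) h (V.M_id Y) (Category.comp_id f))).symm

lemma tObj_of_M {X Y : C} (f : X ⟶ Y) (h : V.M f) : V.tObj f = X :=
  (congrArg Sigma.fst (V.t_uniq f X (𝟙 X) f (V.E_id X) h (Category.id_comp f))).symm

lemma sObj_of_M {X Y : C} (f : X ⟶ Y) (h : V.M f) : V.sObj f = Y :=
  (congrArg Sigma.fst (V.s_uniq f Y f (𝟙 Y) h (V.E_id Y) (Category.comp_id f))).symm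

lemma sObj_of_E {X Y : C} (f : X ⟶ Y) (h : V.E f) : V.sObj f = X :=
  (congrArg Sigma.fst (V.s_uniq f X (𝟙 X) f (V.M_id X) h (Category.id_comp f))).symm

lemma tObj_id (X : C) : V.tObj (𝟙 X) = X := V.tObj_of_E _ (V.E_id X)

lemma sObj_id (X : C) : V.sObj (𝟙 X) = X := V.sObj_of_E _ (V.E_id X)

lemma s_comp_aux {x y z : C} (f : x ⟶ y) (g : y ⟶ z) :
    (V.sm f ≫ V.sm (V.se f ≫ V.sm g)) ≫ V.se (V.se f ≫ V.sm g) ≫ V.se g = f ≫ g := by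
  have h : V.sm (V.se f ≫ V.sm g) ≫ V.se (V.se f ≫ V.sm g) = V.se f ≫ V.sm g :=
    V.s_fac _
  rw [Category.assoc, ← Category.assoc (V.sm (V.se f ≫ V.sm g)), h]
  simp only [Category.assoc]
  rw [V.s_fac g, ← Category.assoc, V.s_fac f]

lemma t_comp_aux {x y z : C} (f : x ⟶ y) (g : y ⟶ z) :
    (V.te f ≫ V.te (V.tm f ≫ V.te g)) ≫ V.tm (V.tm f ≫ V.te g) ≫ V.tm g = f ≫ g := by
  have h : V.te (V.tm f ≫ V.te g) ≫ V.tm (V.tm f ≫ V.te g) = V.tm f ≫ V.te g :=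
    V.t_fac _
  rw [Category.assoc, ← Category.assoc (V.te (V.tm f ≫ V.te g)), h]
  simp only [Category.assoc]
  rw [V.t_fac g, ← Category.assoc, V.t_fac f]

/-- `(gf)_s = (g_m f_e)_s`. -/
lemma sObj_comp {x y z : C} (f : x ⟶ y) (g : y ⟶ z) :
    V.sObj (f ≫ g) = V.sObj (V.se f ≫ V.sm g) :=
  (congrArg Sigma.fst (V.s_uniq (f ≫ g) (V.sObj (V.se f ≫ V.sm g))
    (V.sm f ≫ V.sm (V.se f ≫ V.sm g)) (V.se (V.se f ≫ V.sm g) ≫ V.se g)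
    (V.M_comp _ _ (V.sm_mem f) (V.sm_mem _))
    (V.E_comp _ _ (V.se_mem _) (V.se_mem g)) (V.s_comp_aux f g))).symm

/-- `(gf)_t = (g^e f^m)_t`. -/
lemma tObj_comp {x y z : C} (f : x ⟶ y) (g : y ⟶ z) :
    V.tObj (f ≫ g) = V.tObj (V.tm f ≫ V.te g) :=
  (congrArg Sigma.fst (V.t_uniq (f ≫ g) (V.tObj (V.tm f ≫ V.te g))
    (V.te f ≫ V.te (V.tm f ≫ V.te g)) (V.tm (V.tm f ≫ V.te g) ≫ V.tm g)
    (V.E_comp _ _ (V.te_mem f) (V.te_mem _))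
    (V.M_comp _ _ (V.tm_mem _) (V.tm_mem g)) (V.t_comp_aux f g))).symm

end Variance

section Decomposition

variable {C : Type u} [Category.{v} C] {D : Type u₂} [Category.{v₂} D] (V : Variance C)

/-- `F : C ⥤ D` extends the compatible pair of covariant functors `(G, H)` defined on `E`
and `M` respectively (sharing the object assignment `obj`). -/
def Extends (obj : C → D)
    (Gmap : ∀ {X Y : C} (f : X ⟶ Y), V.E f → (obj X ⟶ obj Y))
    (Hmap : ∀ {X Y : C} (f : X ⟶ Y), V.M f → (obj X ⟶ obj Y)) (F : C ⥤ D) : Prop :=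
  ∃ h : ∀ X : C, F.obj X = obj X,
    (∀ {X Y : C} (f : X ⟶ Y) (hf : V.E f),
        F.map f = eqToHom (h X) ≫ Gmap f hf ≫ eqToHom (h Y).symm) ∧
    (∀ {X Y : C} (f : X ⟶ Y) (hf : V.M f),
        F.map f = eqToHom (h X) ≫ Hmap f hf ≫ eqToHom (h Y).symm)

/-! Uniqueness of the two factorizations shows that `H(m) ∘ G(e)` is the same for every
`(E,M)`-factorization `f = m ∘ e`, and that `G(e) ∘ H(m)` is the same for every
`(M,E)`-factorization `f = e ∘ m`; by compatibility both equal `F(f) := H(f^m) ∘ G(f^e)`.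
For functoriality put `k = g^e ∘ f^m`: then `g ∘ f = (g^m ∘ k^m) ∘ (k^e ∘ f^e)` is an
`(E,M)`-factorization and `F(k) = G(g^e) ∘ H(f^m)`, so
`F(g ∘ f) = H(g^m) ∘ F(k) ∘ G(f^e) = F(g) ∘ F(f)`. -/

theorem Extends.map_eq {obj : C → D}
    {Gmap : ∀ {X Y : C} (f : X ⟶ Y), V.E f → (obj X ⟶ obj Y)}
    {Hmap : ∀ {X Y : C} (f : X ⟶ Y), V.M f → (obj X ⟶ obj Y)} {F : C ⥤ D}
    (hF : Extends V obj Gmap Hmap F) :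
    ∃ h : ∀ X : C, F.obj X = obj X, ∀ {X Y : C} (f : X ⟶ Y),
      F.map f = eqToHom (h X) ≫ Gmap (V.te f) (V.te_mem f) ≫
        Hmap (V.tm f) (V.tm_mem f) ≫ eqToHom (h Y).symm := by
  obtain ⟨h, hE, hM⟩ := hF
  refine ⟨h, fun f => ?_⟩
  conv_lhs => rw [← V.t_fac f]
  simp [hE _ (V.te_mem f), hM _ (V.tm_mem f)]

namespace Variance

section Factorizations

variable {obj : C → D}
  (Gmap : ∀ {X Y : C} (f : X ⟶ Y), V.E f → (obj X ⟶ obj Y))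
  (Hmap : ∀ {X Y : C} (f : X ⟶ Y), V.M f → (obj X ⟶ obj Y))

def liftMap {X Y : C} (f : X ⟶ Y) : obj X ⟶ obj Y :=
  Gmap (V.te f) (V.te_mem f) ≫ Hmap (V.tm f) (V.tm_mem f)

lemma liftMap_eq_of_EM_fac {X Y Z : C} {f : X ⟶ Y} (e : X ⟶ Z) (m : Z ⟶ Y) (he : V.E e)
    (hm : V.M m) (hfac : e ≫ m = f) : V.liftMap Gmap Hmap f = Gmap e he ≫ Hmap m hm := by
  obtain ⟨rfl, hem⟩ := Sigma.mk.inj_iff.mp (V.t_uniq f Z e m he hm hfac)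
  obtain ⟨rfl, rfl⟩ := Prod.mk.inj (eq_of_heq hem)
  rfl

lemma map_sm_comp_map_se_eq_of_ME_fac {X Y Z : C} {f : X ⟶ Y} (m : X ⟶ Z) (e : Z ⟶ Y)
    (hm : V.M m) (he : V.E e) (hfac : m ≫ e = f) :
    Hmap (V.sm f) (V.sm_mem f) ≫ Gmap (V.se f) (V.se_mem f) = Hmap m hm ≫ Gmap e he := by
  obtain ⟨rfl, hme⟩ := Sigma.mk.inj_iff.mp (V.s_uniq f Z m e hm he hfac)
  obtain ⟨rfl, rfl⟩ := Prod.mk.inj (eq_of_heq hme)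
  rfl

end Factorizations

variable (D) in
structure CompatiblePair where
  obj : C → D
  mapE : ∀ {X Y : C} (f : X ⟶ Y), V.E f → (obj X ⟶ obj Y)
  mapE_id : ∀ X : C, mapE (𝟙 X) (V.E_id X) = 𝟙 (obj X)
  mapE_comp : ∀ {X Y Z : C} (f : X ⟶ Y) (g : Y ⟶ Z) (hf : V.E f) (hg : V.E g),
    mapE (f ≫ g) (V.E_comp f g hf hg) = mapE f hf ≫ mapE g hg
  mapM : ∀ {X Y : C} (f : X ⟶ Y), V.M f → (obj X ⟶ obj Y)
  mapM_id : ∀ X : C, mapM (𝟙 X) (V.M_id X) = 𝟙 (obj X)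
  mapM_comp : ∀ {X Y Z : C} (f : X ⟶ Y) (g : Y ⟶ Z) (hf : V.M f) (hg : V.M g),
    mapM (f ≫ g) (V.M_comp f g hf hg) = mapM f hf ≫ mapM g hg
  compat : ∀ {X Y : C} (f : X ⟶ Y),
    mapE (V.te f) (V.te_mem f) ≫ mapM (V.tm f) (V.tm_mem f) =
      mapM (V.sm f) (V.sm_mem f) ≫ mapE (V.se f) (V.se_mem f)

namespace CompatiblePair

variable {V} (P : V.CompatiblePair D)

lemma liftMap_of_E {X Y : C} (f : X ⟶ Y) (hf : V.E f) :
    V.liftMap P.mapE P.mapM f = P.mapE f hf := by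
  rw [V.liftMap_eq_of_EM_fac P.mapE P.mapM f (𝟙 Y) hf (V.M_id Y) (Category.comp_id f),
    P.mapM_id, Category.comp_id]

lemma liftMap_of_M {X Y : C} (f : X ⟶ Y) (hf : V.M f) :
    V.liftMap P.mapE P.mapM f = P.mapM f hf := by
  rw [V.liftMap_eq_of_EM_fac P.mapE P.mapM (𝟙 X) f (V.E_id X) hf (Category.id_comp f),
    P.mapE_id, Category.id_comp]

lemma liftMap_eq_of_ME_fac {X Y Z : C} {f : X ⟶ Y} (m : X ⟶ Z) (e : Z ⟶ Y) (hm : V.M m)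
    (he : V.E e) (hfac : m ≫ e = f) : V.liftMap P.mapE P.mapM f = P.mapM m hm ≫ P.mapE e he :=
  (P.compat f).trans (V.map_sm_comp_map_se_eq_of_ME_fac P.mapE P.mapM m e hm he hfac)

lemma liftMap_comp {X Y Z : C} (f : X ⟶ Y) (g : Y ⟶ Z) :
    V.liftMap P.mapE P.mapM (f ≫ g) =
      V.liftMap P.mapE P.mapM f ≫ V.liftMap P.mapE P.mapM g := by
  set k := V.tm f ≫ V.te g
  calc V.liftMap P.mapE P.mapM (f ≫ g)
      = P.mapE (V.te f) (V.te_mem f) ≫ V.liftMap P.mapE P.mapM k ≫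
          P.mapM (V.tm g) (V.tm_mem g) := by
        rw [V.liftMap_eq_of_EM_fac P.mapE P.mapM _ _ (V.E_comp _ _ (V.te_mem f) (V.te_mem k))
            (V.M_comp _ _ (V.tm_mem k) (V.tm_mem g)) (V.t_comp_aux f g),
          P.mapE_comp _ _ (V.te_mem f) (V.te_mem k), P.mapM_comp _ _ (V.tm_mem k) (V.tm_mem g)]
        simp only [liftMap, Category.assoc]
    _ = _ := by
        rw [P.liftMap_eq_of_ME_fac (V.tm f) (V.te g) (V.tm_mem f) (V.te_mem g) rfl]
        simp only [liftMap, Category.assoc]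

def lift : C ⥤ D where
  obj := P.obj
  map := V.liftMap P.mapE P.mapM
  map_id X := (P.liftMap_of_E (𝟙 X) (V.E_id X)).trans (P.mapE_id X)
  map_comp := P.liftMap_comp

lemma lift_extends : Extends V P.obj P.mapE P.mapM P.lift := by
  refine ⟨fun _ => rfl, fun f hf => ?_, fun f hf => ?_⟩
  · change _ = 𝟙 (P.obj _) ≫ _ ≫ 𝟙 (P.obj _)
    rw [Category.id_comp, Category.comp_id]
    exact P.liftMap_of_E f hf
  · change _ = 𝟙 (P.obj _) ≫ _ ≫ 𝟙 (P.obj _)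
    rw [Category.id_comp, Category.comp_id]
    exact P.liftMap_of_M f hf

lemma eq_lift_of_extends {F : C ⥤ D} (hF : Extends V P.obj P.mapE P.mapM F) : F = P.lift := by
  obtain ⟨h, hmap⟩ := hF.map_eq
  exact CategoryTheory.Functor.ext h fun X Y f => by
    rw [hmap f]; exact congrArg _ (Category.assoc _ _ _).symm

end CompatiblePair

end Variance

/-- Decomposition theorem: a compatible pair of covariant functors `G : E ⥤ D`,
`H : M ⥤ D` agreeing on objects and satisfying `H(f^m)∘G(f^e) = G(f_e)∘H(f_m)` extends to a
unique functor `F : C ⥤ D`, explicitly given by `F(f) = H(f^m)∘G(f^e)`. -/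
theorem decomposition
    (obj : C → D)
    (Gmap : ∀ {X Y : C} (f : X ⟶ Y), V.E f → (obj X ⟶ obj Y))
    (Gid : ∀ X : C, Gmap (𝟙 X) (V.E_id X) = 𝟙 (obj X))
    (Gcomp : ∀ {X Y Z : C} (f : X ⟶ Y) (g : Y ⟶ Z) (hf : V.E f) (hg : V.E g),
      Gmap (f ≫ g) (V.E_comp f g hf hg) = Gmap f hf ≫ Gmap g hg)
    (Hmap : ∀ {X Y : C} (f : X ⟶ Y), V.M f → (obj X ⟶ obj Y))
    (Hid : ∀ X : C, Hmap (𝟙 X) (V.M_id X) = 𝟙 (obj X))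
    (Hcomp : ∀ {X Y Z : C} (f : X ⟶ Y) (g : Y ⟶ Z) (hf : V.M f) (hg : V.M g),
      Hmap (f ≫ g) (V.M_comp f g hf hg) = Hmap f hf ≫ Hmap g hg)
    (compat : ∀ {X Y : C} (f : X ⟶ Y),
      Gmap (V.te f) (V.te_mem f) ≫ Hmap (V.tm f) (V.tm_mem f) =
        Hmap (V.sm f) (V.sm_mem f) ≫ Gmap (V.se f) (V.se_mem f)) :
    (∃! F : C ⥤ D, Extends V obj Gmap Hmap F) ∧
    ∀ F : C ⥤ D, Extends V obj Gmap Hmap F →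
      ∃ h : ∀ X : C, F.obj X = obj X, ∀ {X Y : C} (f : X ⟶ Y),
        F.map f = eqToHom (h X) ≫ Gmap (V.te f) (V.te_mem f) ≫
          Hmap (V.tm f) (V.tm_mem f) ≫ eqToHom (h Y).symm := by
  let P : V.CompatiblePair D := ⟨obj, Gmap, Gid, Gcomp, Hmap, Hid, Hcomp, compat⟩
  exact ⟨⟨P.lift, P.lift_extends, fun _ hF => P.eq_lift_of_extends hF⟩,
    fun _ hF => hF.map_eq⟩

end Decomposition
end

section
/- Decomposition theorem of mixed variance: Let A be a category with variance (E,M) and C a category. The assignment F ↦ (F|_E, F|_M) is a bijection between functors F : A → C of variance (E,M) and compatible pairs consisting of a covariant functor G : E → C and a contravariant functor H : M → C agreeing on objects and satisfying G(f^e)∘H(f_m) = H(f^m)∘G(f_e) for every morphism f of A; the inverse sends (G,H) to the functor F with F(f) = G(f^e)∘H(f_m). -/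
/-!
Both directions rest on the uniqueness of the two factorizations. If `f` and `g` both lie in
`E`, then `(g_m f_e)_e = f` and `(g^e f^m)^m` is an identity, so the second functoriality
equation of a functor of variance reduces to `F(gf) = F(g) F(f)`; dually the first one makes
`F|_M` contravariant. Applying the two equations to `f = f_e ∘ f_m` and `f = f^m ∘ f^e`
gives `F(f) = G(f^e) H(f_m) = H(f^m) G(f_e)`, which is compatibility and shows that `F` is
determined by its restrictions. Conversely `f ↦ G(f^e) H(f_m)` is a functor of variance
because `(gf)^e = (g^e f^m)^e f^e` and `(gf)_m = (g_m f_e)_m f_m`, compatibility being used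
for the second equation.

Morphisms whose endpoints agree only propositionally are compared in `Arrow`:
`Arrow.mk f = Arrow.mk g` is equality up to `eqToHom` transport at both ends.
-/

open CategoryTheory

universe v u v₂ u₂

/-- A functor of variance `(E,M)` (given by the variance structure `V`): it sends a morphism
`f` to a morphism `F(f) : F(f_s) ⟶ F(f_t)`, preserves identities, and satisfies the two
mixed functoriality equations
`F(gf) = F((g^e f^m)^e) ∘ F(f) ∘ F((g_m f_e)_m)` and
`F(gf) = F((g^e f^m)^m) ∘ F(g) ∘ F((g_m f_e)_e)`. -/
structure VFunctor {C : Type u} [Category.{v} C] (V : Variance C)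
    (D : Type u₂) [Category.{v₂} D] where
  obj : C → D
  map : ∀ {X Y : C} (f : X ⟶ Y), obj (V.sObj f) ⟶ obj (V.tObj f)
  map_id : ∀ X : C,
    map (𝟙 X) = eqToHom (congrArg obj (V.sObj_id X)) ≫
      eqToHom (congrArg obj (V.tObj_id X)).symm
  map_comp₁ : ∀ {x y z : C} (f : x ⟶ y) (g : y ⟶ z),
    map (f ≫ g) =
      eqToHom (congrArg obj ((V.sObj_comp f g).trans
        (V.sObj_of_M _ (V.sm_mem (V.se f ≫ V.sm g))).symm)) ≫
      map (V.sm (V.se f ≫ V.sm g)) ≫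
      eqToHom (congrArg obj (V.tObj_of_M _ (V.sm_mem (V.se f ≫ V.sm g)))) ≫
      map f ≫
      eqToHom (congrArg obj (V.sObj_of_E _ (V.te_mem (V.tm f ≫ V.te g))).symm) ≫
      map (V.te (V.tm f ≫ V.te g)) ≫
      eqToHom (congrArg obj ((V.tObj_of_E _ (V.te_mem (V.tm f ≫ V.te g))).trans
        (V.tObj_comp f g).symm))
  map_comp₂ : ∀ {x y z : C} (f : x ⟶ y) (g : y ⟶ z),
    map (f ≫ g) =
      eqToHom (congrArg obj ((V.sObj_comp f g).trans
        (V.sObj_of_E _ (V.se_mem (V.se f ≫ V.sm g))).symm)) ≫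
      map (V.se (V.se f ≫ V.sm g)) ≫
      eqToHom (congrArg obj (V.tObj_of_E _ (V.se_mem (V.se f ≫ V.sm g)))) ≫
      map g ≫
      eqToHom (congrArg obj (V.sObj_of_M _ (V.tm_mem (V.tm f ≫ V.te g))).symm) ≫
      map (V.tm (V.tm f ≫ V.te g)) ≫
      eqToHom (congrArg obj ((V.tObj_of_M _ (V.tm_mem (V.tm f ≫ V.te g))).trans
        (V.tObj_comp f g).symm))

/-- A compatible pair on a variance `(E,M)`: a covariant functor `G` on `E` and a
contravariant functor `H` on `M`, agreeing on objects, with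
`G(f^e)∘H(f_m) = H(f^m)∘G(f_e)` for every morphism `f`. -/
structure CompatPair {C : Type u} [Category.{v} C] (V : Variance C)
    (D : Type u₂) [Category.{v₂} D] where
  obj : C → D
  Gmap : ∀ {X Y : C} (f : X ⟶ Y), V.E f → (obj X ⟶ obj Y)
  Gid : ∀ X : C, Gmap (𝟙 X) (V.E_id X) = 𝟙 (obj X)
  Gcomp : ∀ {X Y Z : C} (f : X ⟶ Y) (g : Y ⟶ Z) (hf : V.E f) (hg : V.E g),
    Gmap (f ≫ g) (V.E_comp f g hf hg) = Gmap f hf ≫ Gmap g hg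
  Hmap : ∀ {X Y : C} (f : X ⟶ Y), V.M f → (obj Y ⟶ obj X)
  Hid : ∀ X : C, Hmap (𝟙 X) (V.M_id X) = 𝟙 (obj X)
  Hcomp : ∀ {X Y Z : C} (f : X ⟶ Y) (g : Y ⟶ Z) (hf : V.M f) (hg : V.M g),
    Hmap (f ≫ g) (V.M_comp f g hf hg) = Hmap g hg ≫ Hmap f hf
  compat : ∀ {X Y : C} (f : X ⟶ Y),
    Hmap (V.sm f) (V.sm_mem f) ≫ Gmap (V.te f) (V.te_mem f) =
      Gmap (V.se f) (V.se_mem f) ≫ Hmap (V.tm f) (V.tm_mem f)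

/-- The functor of variance `F` restricts to the compatible pair `P`
(equivalently, `F` is obtained from `P` by `F(f) = G(f^e)∘H(f_m)`). -/
def RestrictsTo {C : Type u} [Category.{v} C] (V : Variance C) {D : Type u₂}
    [Category.{v₂} D] (F : VFunctor V D) (P : CompatPair V D) : Prop :=
  ∃ h : ∀ X : C, F.obj X = P.obj X, ∀ {X Y : C} (f : X ⟶ Y),
    F.map f = eqToHom (h (V.sObj f)) ≫ P.Hmap (V.sm f) (V.sm_mem f) ≫
      P.Gmap (V.te f) (V.te_mem f) ≫ eqToHom (h (V.tObj f)).symm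

namespace CategoryTheory.Arrow

variable {T : Type u} [Category.{v} T] {X Y Z X' Y' Z' : T}

lemma mk_eqToHom (h : X = Y) : Arrow.mk (eqToHom h) = Arrow.mk (𝟙 X) := by
  subst h; rfl

lemma eq_conj_eqToHom_of_mk_eq {f : X ⟶ Y} {g : X' ⟶ Y'} (h : Arrow.mk f = Arrow.mk g) :
    f = eqToHom (congrArg Arrow.left h : X = X') ≫ g ≫
      eqToHom (congrArg Arrow.right h : Y = Y').symm := by
  obtain ⟨_, _, e⟩ := (mk_eq_mk_iff f g).1 h
  exact e

lemma mk_comp_congr {f : X ⟶ Y} {g : Y ⟶ Z} {f' : X' ⟶ Y'} {g' : Y' ⟶ Z'}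
    (hf : Arrow.mk f = Arrow.mk f') (hg : Arrow.mk g = Arrow.mk g') :
    Arrow.mk (f ≫ g) = Arrow.mk (f' ≫ g') := by
  obtain ⟨rfl, rfl, rfl⟩ := (mk_eq_mk_iff f f').1 hf
  obtain ⟨-, rfl, rfl⟩ := (mk_eq_mk_iff g g').1 hg
  simp

lemma mk_comp_of_left_eq_id {f : X ⟶ Y} {g : Y ⟶ Z} (hf : Arrow.mk f = Arrow.mk (𝟙 Y)) :
    Arrow.mk (f ≫ g) = Arrow.mk g := by
  simpa using mk_comp_congr hf (rfl : Arrow.mk g = Arrow.mk g)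

lemma mk_comp_of_right_eq_id {f : X ⟶ Y} {g : Y ⟶ Z} (hg : Arrow.mk g = Arrow.mk (𝟙 Y)) :
    Arrow.mk (f ≫ g) = Arrow.mk f := by
  simpa using mk_comp_congr (rfl : Arrow.mk f = Arrow.mk f) hg

end CategoryTheory.Arrow

namespace Variance

variable {C : Type u} [Category.{v} C] (V : Variance C) {X Y Z X' Y' : C}

lemma arrow_mk_sm_of_fac {f : X ⟶ Y} {m : X ⟶ Z} {e : Z ⟶ Y} (hm : V.M m) (he : V.E e)
    (h : m ≫ e = f) : Arrow.mk (V.sm f) = Arrow.mk m :=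
  (congrArg (fun s => Arrow.mk s.2.1) (V.s_uniq f Z m e hm he h)).symm

lemma arrow_mk_se_of_fac {f : X ⟶ Y} {m : X ⟶ Z} {e : Z ⟶ Y} (hm : V.M m) (he : V.E e)
    (h : m ≫ e = f) : Arrow.mk (V.se f) = Arrow.mk e :=
  (congrArg (fun s => Arrow.mk s.2.2) (V.s_uniq f Z m e hm he h)).symm

lemma arrow_mk_te_of_fac {f : X ⟶ Y} {e : X ⟶ Z} {m : Z ⟶ Y} (he : V.E e) (hm : V.M m)
    (h : e ≫ m = f) : Arrow.mk (V.te f) = Arrow.mk e :=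
  (congrArg (fun s => Arrow.mk s.2.1) (V.t_uniq f Z e m he hm h)).symm

lemma arrow_mk_tm_of_fac {f : X ⟶ Y} {e : X ⟶ Z} {m : Z ⟶ Y} (he : V.E e) (hm : V.M m)
    (h : e ≫ m = f) : Arrow.mk (V.tm f) = Arrow.mk m :=
  (congrArg (fun s => Arrow.mk s.2.2) (V.t_uniq f Z e m he hm h)).symm

lemma arrow_mk_sm_of_E {f : X ⟶ Y} (hf : V.E f) : Arrow.mk (V.sm f) = Arrow.mk (𝟙 X) :=
  V.arrow_mk_sm_of_fac (V.M_id X) hf (Category.id_comp f)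

lemma arrow_mk_se_of_E {f : X ⟶ Y} (hf : V.E f) : Arrow.mk (V.se f) = Arrow.mk f :=
  V.arrow_mk_se_of_fac (V.M_id X) hf (Category.id_comp f)

lemma arrow_mk_te_of_E {f : X ⟶ Y} (hf : V.E f) : Arrow.mk (V.te f) = Arrow.mk f :=
  V.arrow_mk_te_of_fac hf (V.M_id Y) (Category.comp_id f)

lemma arrow_mk_tm_of_E {f : X ⟶ Y} (hf : V.E f) : Arrow.mk (V.tm f) = Arrow.mk (𝟙 Y) :=
  V.arrow_mk_tm_of_fac hf (V.M_id Y) (Category.comp_id f)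

lemma arrow_mk_sm_of_M {f : X ⟶ Y} (hf : V.M f) : Arrow.mk (V.sm f) = Arrow.mk f :=
  V.arrow_mk_sm_of_fac hf (V.E_id Y) (Category.comp_id f)

lemma arrow_mk_se_of_M {f : X ⟶ Y} (hf : V.M f) : Arrow.mk (V.se f) = Arrow.mk (𝟙 Y) :=
  V.arrow_mk_se_of_fac hf (V.E_id Y) (Category.comp_id f)

lemma arrow_mk_te_of_M {f : X ⟶ Y} (hf : V.M f) : Arrow.mk (V.te f) = Arrow.mk (𝟙 X) :=
  V.arrow_mk_te_of_fac (V.E_id X) hf (Category.id_comp f)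

lemma arrow_mk_tm_of_M {f : X ⟶ Y} (hf : V.M f) : Arrow.mk (V.tm f) = Arrow.mk f :=
  V.arrow_mk_tm_of_fac (V.E_id X) hf (Category.id_comp f)

lemma arrow_mk_sm_comp (f : X ⟶ Y) (g : Y ⟶ Z) :
    Arrow.mk (V.sm (f ≫ g)) = Arrow.mk (V.sm f ≫ V.sm (V.se f ≫ V.sm g)) :=
  V.arrow_mk_sm_of_fac (V.M_comp _ _ (V.sm_mem f) (V.sm_mem _))
    (V.E_comp _ _ (V.se_mem _) (V.se_mem g)) (V.s_comp_aux f g)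

lemma arrow_mk_se_comp (f : X ⟶ Y) (g : Y ⟶ Z) :
    Arrow.mk (V.se (f ≫ g)) = Arrow.mk (V.se (V.se f ≫ V.sm g) ≫ V.se g) :=
  V.arrow_mk_se_of_fac (V.M_comp _ _ (V.sm_mem f) (V.sm_mem _))
    (V.E_comp _ _ (V.se_mem _) (V.se_mem g)) (V.s_comp_aux f g)

lemma arrow_mk_te_comp (f : X ⟶ Y) (g : Y ⟶ Z) :
    Arrow.mk (V.te (f ≫ g)) = Arrow.mk (V.te f ≫ V.te (V.tm f ≫ V.te g)) :=
  V.arrow_mk_te_of_fac (V.E_comp _ _ (V.te_mem f) (V.te_mem _))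
    (V.M_comp _ _ (V.tm_mem _) (V.tm_mem g)) (V.t_comp_aux f g)

lemma arrow_mk_tm_comp (f : X ⟶ Y) (g : Y ⟶ Z) :
    Arrow.mk (V.tm (f ≫ g)) = Arrow.mk (V.tm (V.tm f ≫ V.te g) ≫ V.tm g) :=
  V.arrow_mk_tm_of_fac (V.E_comp _ _ (V.te_mem f) (V.te_mem _))
    (V.M_comp _ _ (V.tm_mem _) (V.tm_mem g)) (V.t_comp_aux f g)

lemma arrow_mk_sm_congr {f : X ⟶ Y} {g : X' ⟶ Y'} (h : Arrow.mk f = Arrow.mk g) :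
    Arrow.mk (V.sm f) = Arrow.mk (V.sm g) :=
  congrArg (fun a : Arrow C => Arrow.mk (V.sm a.hom)) h

lemma arrow_mk_se_congr {f : X ⟶ Y} {g : X' ⟶ Y'} (h : Arrow.mk f = Arrow.mk g) :
    Arrow.mk (V.se f) = Arrow.mk (V.se g) :=
  congrArg (fun a : Arrow C => Arrow.mk (V.se a.hom)) h

lemma arrow_mk_te_congr {f : X ⟶ Y} {g : X' ⟶ Y'} (h : Arrow.mk f = Arrow.mk g) :
    Arrow.mk (V.te f) = Arrow.mk (V.te g) :=
  congrArg (fun a : Arrow C => Arrow.mk (V.te a.hom)) h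

lemma arrow_mk_tm_congr {f : X ⟶ Y} {g : X' ⟶ Y'} (h : Arrow.mk f = Arrow.mk g) :
    Arrow.mk (V.tm f) = Arrow.mk (V.tm g) :=
  congrArg (fun a : Arrow C => Arrow.mk (V.tm a.hom)) h

end Variance

namespace VFunctor

open Arrow

variable {C : Type u} [Category.{v} C] {V : Variance C} {D : Type u₂} [Category.{v₂} D]
  (F : VFunctor V D) {X Y Z X' Y' : C}

lemma arrow_mk_map_congr {f : X ⟶ Y} {g : X' ⟶ Y'} (h : Arrow.mk f = Arrow.mk g) :
    Arrow.mk (F.map f) = Arrow.mk (F.map g) :=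
  congrArg (fun a : Arrow C => Arrow.mk (F.map a.hom)) h

lemma arrow_mk_map_of_eq_id {f : X ⟶ Y} (h : Arrow.mk f = Arrow.mk (𝟙 Z)) :
    Arrow.mk (F.map f) = Arrow.mk (𝟙 (F.obj Z)) := by
  rw [F.arrow_mk_map_congr h, F.map_id, arrow_mk_eqToHom_comp, mk_eqToHom]

def mapE (f : X ⟶ Y) (hf : V.E f) : F.obj X ⟶ F.obj Y :=
  eqToHom (congrArg F.obj (V.sObj_of_E f hf)).symm ≫ F.map f ≫
    eqToHom (congrArg F.obj (V.tObj_of_E f hf))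

def mapM (f : X ⟶ Y) (hf : V.M f) : F.obj Y ⟶ F.obj X :=
  eqToHom (congrArg F.obj (V.sObj_of_M f hf)).symm ≫ F.map f ≫
    eqToHom (congrArg F.obj (V.tObj_of_M f hf))

lemma arrow_mk_mapE (f : X ⟶ Y) (hf : V.E f) : Arrow.mk (F.mapE f hf) = Arrow.mk (F.map f) := by
  simp [mapE]

lemma arrow_mk_mapM (f : X ⟶ Y) (hf : V.M f) : Arrow.mk (F.mapM f hf) = Arrow.mk (F.map f) := by
  simp [mapM]

lemma mapE_id (X : C) : F.mapE (𝟙 X) (V.E_id X) = 𝟙 (F.obj X) := by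
  simp [mapE, F.map_id]

lemma mapM_id (X : C) : F.mapM (𝟙 X) (V.M_id X) = 𝟙 (F.obj X) := by
  simp [mapM, F.map_id]

lemma mapE_comp (f : X ⟶ Y) (g : Y ⟶ Z) (hf : V.E f) (hg : V.E g) :
    F.mapE (f ≫ g) (V.E_comp f g hf hg) = F.mapE f hf ≫ F.mapE g hg := by
  have hfirst : Arrow.mk (F.map (V.se (V.se f ≫ V.sm g))) = Arrow.mk (F.map f) :=
    F.arrow_mk_map_congr <| (V.arrow_mk_se_congr <| (mk_comp_of_right_eq_id
      (V.arrow_mk_sm_of_E hg)).trans (V.arrow_mk_se_of_E hf)).trans (V.arrow_mk_se_of_E hf)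
  have hlast : Arrow.mk (F.map (V.tm (V.tm f ≫ V.te g))) = Arrow.mk (𝟙 (F.obj Z)) :=
    F.arrow_mk_map_of_eq_id <| (V.arrow_mk_tm_congr <| (mk_comp_of_left_eq_id
      (V.arrow_mk_tm_of_E hf)).trans (V.arrow_mk_te_of_E hg)).trans (V.arrow_mk_tm_of_E hg)
  simp only [mapE]
  rw [F.map_comp₂, eq_conj_eqToHom_of_mk_eq hfirst, eq_conj_eqToHom_of_mk_eq hlast]
  simp

lemma mapM_comp (f : X ⟶ Y) (g : Y ⟶ Z) (hf : V.M f) (hg : V.M g) :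
    F.mapM (f ≫ g) (V.M_comp f g hf hg) = F.mapM g hg ≫ F.mapM f hf := by
  have hfirst : Arrow.mk (F.map (V.sm (V.se f ≫ V.sm g))) = Arrow.mk (F.map g) :=
    F.arrow_mk_map_congr <| (V.arrow_mk_sm_congr <| (mk_comp_of_left_eq_id
      (V.arrow_mk_se_of_M hf)).trans (V.arrow_mk_sm_of_M hg)).trans (V.arrow_mk_sm_of_M hg)
  have hlast : Arrow.mk (F.map (V.te (V.tm f ≫ V.te g))) = Arrow.mk (𝟙 (F.obj X)) :=
    F.arrow_mk_map_of_eq_id <| (V.arrow_mk_te_congr <| (mk_comp_of_right_eq_id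
      (V.arrow_mk_te_of_M hg)).trans (V.arrow_mk_tm_of_M hf)).trans (V.arrow_mk_te_of_M hf)
  simp only [mapM]
  rw [F.map_comp₁, eq_conj_eqToHom_of_mk_eq hfirst, eq_conj_eqToHom_of_mk_eq hlast]
  simp

lemma map_eq_mapM_comp_mapE (f : X ⟶ Y) :
    F.map f = F.mapM (V.sm f) (V.sm_mem f) ≫ F.mapE (V.te f) (V.te_mem f) := by
  have hfirst : Arrow.mk (F.map (V.sm (V.se (V.sm f) ≫ V.sm (V.se f)))) =
      Arrow.mk (𝟙 (F.obj (V.sObj f))) :=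
    F.arrow_mk_map_of_eq_id <| (V.arrow_mk_sm_congr ((mk_comp_of_left_eq_id
      (V.arrow_mk_se_of_M (V.sm_mem f))).trans (V.arrow_mk_sm_of_E (V.se_mem f)))).trans
      (V.arrow_mk_sm_of_E (V.E_id _))
  have hlast : Arrow.mk (F.map (V.te (V.tm (V.sm f) ≫ V.te (V.se f)))) =
      Arrow.mk (F.map (V.te f)) := by
    refine F.arrow_mk_map_congr (V.arrow_mk_te_congr ?_)
    rw [mk_comp_congr (V.arrow_mk_tm_of_M (V.sm_mem f)) (V.arrow_mk_te_of_E (V.se_mem f)),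
      V.s_fac]
  obtain ⟨_, _, hfac⟩ := (mk_eq_mk_iff _ _).1
    (F.arrow_mk_map_congr (congrArg Arrow.mk (V.s_fac f).symm))
  rw [hfac, F.map_comp₁, eq_conj_eqToHom_of_mk_eq hfirst, eq_conj_eqToHom_of_mk_eq hlast]
  simp [mapE, mapM]

lemma map_eq_mapE_comp_mapM (f : X ⟶ Y) :
    F.map f = F.mapE (V.se f) (V.se_mem f) ≫ F.mapM (V.tm f) (V.tm_mem f) := by
  have hfirst : Arrow.mk (F.map (V.se (V.se (V.te f) ≫ V.sm (V.tm f)))) =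
      Arrow.mk (F.map (V.se f)) := by
    refine F.arrow_mk_map_congr (V.arrow_mk_se_congr ?_)
    rw [mk_comp_congr (V.arrow_mk_se_of_E (V.te_mem f)) (V.arrow_mk_sm_of_M (V.tm_mem f)),
      V.t_fac]
  have hlast : Arrow.mk (F.map (V.tm (V.tm (V.te f) ≫ V.te (V.tm f)))) =
      Arrow.mk (𝟙 (F.obj (V.tObj f))) :=
    F.arrow_mk_map_of_eq_id <| (V.arrow_mk_tm_congr ((mk_comp_of_left_eq_id
      (V.arrow_mk_tm_of_E (V.te_mem f))).trans (V.arrow_mk_te_of_M (V.tm_mem f)))).trans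
      (V.arrow_mk_tm_of_E (V.E_id _))
  obtain ⟨_, _, hfac⟩ := (mk_eq_mk_iff _ _).1
    (F.arrow_mk_map_congr (congrArg Arrow.mk (V.t_fac f).symm))
  rw [hfac, F.map_comp₂, eq_conj_eqToHom_of_mk_eq hfirst, eq_conj_eqToHom_of_mk_eq hlast]
  simp [mapE, mapM]

def toCompatPair : CompatPair V D where
  obj := F.obj
  Gmap := F.mapE
  Gid := F.mapE_id
  Gcomp := F.mapE_comp
  Hmap := F.mapM
  Hid := F.mapM_id
  Hcomp := F.mapM_comp
  compat f := (F.map_eq_mapM_comp_mapE f).symm.trans (F.map_eq_mapE_comp_mapM f)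

end VFunctor

namespace CompatPair

open Arrow

variable {C : Type u} [Category.{v} C] {V : Variance C} {D : Type u₂} [Category.{v₂} D]
  (P : CompatPair V D) {X Y Z X' Y' : C}

lemma arrow_mk_Gmap_congr {f : X ⟶ Y} {g : X' ⟶ Y'} (h : Arrow.mk f = Arrow.mk g)
    (hf : V.E f) (hg : V.E g) : Arrow.mk (P.Gmap f hf) = Arrow.mk (P.Gmap g hg) := by
  obtain ⟨rfl, rfl, h⟩ := (mk_eq_mk_iff f g).1 h
  simp only [eqToHom_refl, Category.id_comp, Category.comp_id] at h
  subst h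
  rfl

lemma arrow_mk_Hmap_congr {f : X ⟶ Y} {g : X' ⟶ Y'} (h : Arrow.mk f = Arrow.mk g)
    (hf : V.M f) (hg : V.M g) : Arrow.mk (P.Hmap f hf) = Arrow.mk (P.Hmap g hg) := by
  obtain ⟨rfl, rfl, h⟩ := (mk_eq_mk_iff f g).1 h
  simp only [eqToHom_refl, Category.id_comp, Category.comp_id] at h
  subst h
  rfl

lemma arrow_mk_Gmap_of_eq_id {f : X ⟶ Y} (h : Arrow.mk f = Arrow.mk (𝟙 Z)) (hf : V.E f) :
    Arrow.mk (P.Gmap f hf) = Arrow.mk (𝟙 (P.obj Z)) := by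
  rw [P.arrow_mk_Gmap_congr h hf (V.E_id Z), P.Gid]

lemma arrow_mk_Hmap_of_eq_id {f : X ⟶ Y} (h : Arrow.mk f = Arrow.mk (𝟙 Z)) (hf : V.M f) :
    Arrow.mk (P.Hmap f hf) = Arrow.mk (𝟙 (P.obj Z)) := by
  rw [P.arrow_mk_Hmap_congr h hf (V.M_id Z), P.Hid]

def map (f : X ⟶ Y) : P.obj (V.sObj f) ⟶ P.obj (V.tObj f) :=
  P.Hmap (V.sm f) (V.sm_mem f) ≫ P.Gmap (V.te f) (V.te_mem f)

lemma arrow_mk_map_of_E {f : X ⟶ Y} (hf : V.E f) :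
    Arrow.mk (P.map f) = Arrow.mk (P.Gmap f hf) :=
  (mk_comp_of_left_eq_id (P.arrow_mk_Hmap_of_eq_id (V.arrow_mk_sm_of_E hf) _)).trans
    (P.arrow_mk_Gmap_congr (V.arrow_mk_te_of_E hf) _ _)

lemma arrow_mk_map_of_M {f : X ⟶ Y} (hf : V.M f) :
    Arrow.mk (P.map f) = Arrow.mk (P.Hmap f hf) :=
  (mk_comp_of_right_eq_id (P.arrow_mk_Gmap_of_eq_id (V.arrow_mk_te_of_M hf) _)).trans
    (P.arrow_mk_Hmap_congr (V.arrow_mk_sm_of_M hf) _ _)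

def toVFunctor : VFunctor V D where
  obj := P.obj
  map := P.map
  map_id X := by
    rw [eq_conj_eqToHom_of_mk_eq (P.arrow_mk_map_of_E (V.E_id X))]
    simp [P.Gid]
  map_comp₁ f g := by
    have hm : Arrow.mk (P.Hmap (V.sm (f ≫ g)) (V.sm_mem _)) =
        Arrow.mk (P.Hmap (V.sm (V.se f ≫ V.sm g)) (V.sm_mem _) ≫
          P.Hmap (V.sm f) (V.sm_mem f)) := by
      rw [← P.Hcomp]
      exact P.arrow_mk_Hmap_congr (V.arrow_mk_sm_comp f g) _ _
    have he : Arrow.mk (P.Gmap (V.te (f ≫ g)) (V.te_mem _)) =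
        Arrow.mk (P.Gmap (V.te f) (V.te_mem f) ≫
          P.Gmap (V.te (V.tm f ≫ V.te g)) (V.te_mem _)) := by
      rw [← P.Gcomp]
      exact P.arrow_mk_Gmap_congr (V.arrow_mk_te_comp f g) _ _
    rw [eq_conj_eqToHom_of_mk_eq (P.arrow_mk_map_of_M (V.sm_mem (V.se f ≫ V.sm g))),
      eq_conj_eqToHom_of_mk_eq (P.arrow_mk_map_of_E (V.te_mem (V.tm f ≫ V.te g)))]
    simp only [map]
    rw [eq_conj_eqToHom_of_mk_eq hm, eq_conj_eqToHom_of_mk_eq he]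
    simp
  map_comp₂ f g := by
    have he : Arrow.mk (P.Gmap (V.se (f ≫ g)) (V.se_mem _)) =
        Arrow.mk (P.Gmap (V.se (V.se f ≫ V.sm g)) (V.se_mem _) ≫
          P.Gmap (V.se g) (V.se_mem g)) := by
      rw [← P.Gcomp]
      exact P.arrow_mk_Gmap_congr (V.arrow_mk_se_comp f g) _ _
    have hm : Arrow.mk (P.Hmap (V.tm (f ≫ g)) (V.tm_mem _)) =
        Arrow.mk (P.Hmap (V.tm g) (V.tm_mem g) ≫
          P.Hmap (V.tm (V.tm f ≫ V.te g)) (V.tm_mem _)) := by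
      rw [← P.Hcomp]
      exact P.arrow_mk_Hmap_congr (V.arrow_mk_tm_comp f g) _ _
    rw [eq_conj_eqToHom_of_mk_eq (P.arrow_mk_map_of_E (V.se_mem (V.se f ≫ V.sm g))),
      eq_conj_eqToHom_of_mk_eq (P.arrow_mk_map_of_M (V.tm_mem (V.tm f ≫ V.te g)))]
    simp only [map]
    rw [P.compat (f ≫ g), P.compat g, eq_conj_eqToHom_of_mk_eq he, eq_conj_eqToHom_of_mk_eq hm]
    simp

end CompatPair

section Correspondence

variable {C : Type u} [Category.{v} C] {V : Variance C} {D : Type u₂} [Category.{v₂} D]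

lemma VFunctor.ext_of_arrow_mk_eq {F F' : VFunctor V D} (hobj : F.obj = F'.obj)
    (hmap : ∀ {X Y : C} (f : X ⟶ Y), Arrow.mk (F.map f) = Arrow.mk (F'.map f)) : F = F' := by
  obtain ⟨obj, map, _, _, _⟩ := F
  obtain ⟨obj', map', _, _, _⟩ := F'
  subst hobj
  obtain rfl : @map = @map' := by
    funext X Y f
    exact (Arrow.mk_inj _ _).1 (hmap f)
  rfl

lemma CompatPair.ext_of_arrow_mk_eq {P Q : CompatPair V D} (hobj : P.obj = Q.obj)
    (hG : ∀ {X Y : C} (f : X ⟶ Y) (hf : V.E f),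
      Arrow.mk (P.Gmap f hf) = Arrow.mk (Q.Gmap f hf))
    (hH : ∀ {X Y : C} (f : X ⟶ Y) (hf : V.M f),
      Arrow.mk (P.Hmap f hf) = Arrow.mk (Q.Hmap f hf)) : P = Q := by
  obtain ⟨obj, G, _, _, H, _, _, _⟩ := P
  obtain ⟨obj', G', _, _, H', _, _, _⟩ := Q
  subst hobj
  obtain rfl : @G = @G' := by
    funext X Y f hf
    exact (Arrow.mk_inj _ _).1 (hG f hf)
  obtain rfl : @H = @H' := by
    funext X Y f hf
    exact (Arrow.mk_inj _ _).1 (hH f hf)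
  rfl

lemma restrictsTo_iff {F : VFunctor V D} {P : CompatPair V D} :
    RestrictsTo V F P ↔
      F.obj = P.obj ∧ ∀ {X Y : C} (f : X ⟶ Y), Arrow.mk (F.map f) = Arrow.mk (P.map f) := by
  constructor
  · rintro ⟨hobj, hmap⟩
    exact ⟨funext hobj, fun f => (Arrow.mk_eq_mk_iff _ _).2
      ⟨hobj _, hobj _, by rw [hmap f, CompatPair.map, Category.assoc]⟩⟩
  · rintro ⟨hobj, hmap⟩
    exact ⟨congrFun hobj, fun f => by
      simpa [CompatPair.map] using Arrow.eq_conj_eqToHom_of_mk_eq (hmap f)⟩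

lemma VFunctor.restrictsTo_toCompatPair (F : VFunctor V D) : RestrictsTo V F F.toCompatPair :=
  restrictsTo_iff.2 ⟨rfl, fun f => by rw [F.map_eq_mapM_comp_mapE f]; rfl⟩

lemma CompatPair.restrictsTo_toVFunctor (P : CompatPair V D) : RestrictsTo V P.toVFunctor P :=
  restrictsTo_iff.2 ⟨rfl, fun _ => rfl⟩

lemma RestrictsTo.eq_toCompatPair {F : VFunctor V D} {P : CompatPair V D}
    (h : RestrictsTo V F P) : P = F.toCompatPair := by
  obtain ⟨hobj, hmap⟩ := restrictsTo_iff.1 h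
  refine CompatPair.ext_of_arrow_mk_eq hobj.symm (fun f hf => ?_) (fun f hf => ?_)
  · rw [← P.arrow_mk_map_of_E hf, ← hmap f]
    exact (F.arrow_mk_mapE f hf).symm
  · rw [← P.arrow_mk_map_of_M hf, ← hmap f]
    exact (F.arrow_mk_mapM f hf).symm

lemma RestrictsTo.eq_toVFunctor {F : VFunctor V D} {P : CompatPair V D}
    (h : RestrictsTo V F P) : F = P.toVFunctor := by
  obtain ⟨hobj, hmap⟩ := restrictsTo_iff.1 h
  exact VFunctor.ext_of_arrow_mk_eq hobj hmap

end Correspondence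

/-- Decomposition theorem of mixed variance: the restriction assignment
`F ↦ (F|_E, F|_M)` is a bijective correspondence between functors of variance `(E,M)`
and compatible pairs. -/
theorem decomposition_mixed_variance {C : Type u} [Category.{v} C] (V : Variance C)
    {D : Type u₂} [Category.{v₂} D] :
    (∀ F : VFunctor V D, ∃! P : CompatPair V D, RestrictsTo V F P) ∧
    (∀ P : CompatPair V D, ∃! F : VFunctor V D, RestrictsTo V F P) :=
  ⟨fun F => ⟨F.toCompatPair, F.restrictsTo_toCompatPair, fun _ h => h.eq_toCompatPair⟩,
    fun P => ⟨P.toVFunctor, P.restrictsTo_toVFunctor, fun _ h => h.eq_toVFunctor⟩⟩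
end

section
/- Let G be a group with a variance (E,M) (viewing G as a one-object category). The map g ↦ g^e (the E-part of the terminating factorization g = g^m g^e) is a group homomorphism G → E if and only if g^e = g_e for every g ∈ G. -/
/-- A variance `(E,M)` on a group `G` (viewed as a one-object category): subgroups `E`, `M`
such that each `g` factors uniquely as `g = g^m * g^e` (with `g^e = te g ∈ E`,
`g^m = tm g ∈ M`) and uniquely as `g = g_e * g_m` (with `g_e = se g ∈ E`,
`g_m = sm g ∈ M`). -/
structure GroupVariance (G : Type*) [Group G] where
  E : Subgroup G
  M : Subgroup G
  te : G → E
  tm : G → M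
  t_fac : ∀ g : G, (tm g : G) * (te g : G) = g
  t_uniq : ∀ (g : G) (e : E) (m : M), (m : G) * (e : G) = g → e = te g ∧ m = tm g
  se : G → E
  sm : G → M
  s_fac : ∀ g : G, (se g : G) * (sm g : G) = g
  s_uniq : ∀ (g : G) (e : E) (m : M), (e : G) * (m : G) = g → e = se g ∧ m = sm g

/-- For a group `G` with variance `(E,M)`, the map `g ↦ g^e` is a group homomorphism
`G → E` if and only if `g^e = g_e` for every `g`. -/
theorem te_hom_iff {G : Type*} [Group G] (V : GroupVariance G) :
    (∃ φ : G →* V.E, ∀ g : G, φ g = V.te g) ↔ ∀ g : G, V.te g = V.se g := by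
  have hE : ∀ e : V.E, V.te (e : G) = e := fun e =>
    ((V.t_uniq (e : G) e 1 (by simp)).1).symm
  have hM : ∀ m : V.M, V.te (m : G) = 1 := fun m =>
    ((V.t_uniq (m : G) 1 m (by simp)).1).symm
  constructor
  · rintro ⟨φ, hφ⟩ g
    have := V.s_fac g
    calc V.te g = φ g := (hφ g).symm
      _ = φ ((V.se g : G) * (V.sm g : G)) := by rw [this]
      _ = φ (V.se g : G) * φ (V.sm g : G) := map_mul _ _ _
      _ = V.te (V.se g : G) * V.te (V.sm g : G) := by rw [hφ, hφ]
      _ = V.se g * 1 := by rw [hE, hM]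
      _ = V.se g := mul_one _
  · intro h
    have hMl : ∀ (m : V.M) (x : G), V.te ((m : G) * x) = V.te x := fun m x =>
      ((V.t_uniq ((m : G) * x) (V.te x) (m * V.tm x)
        (by push_cast; rw [mul_assoc, V.t_fac])).1).symm
    refine ⟨{ toFun := V.te, map_one' := ?_, map_mul' := ?_ }, fun g => rfl⟩
    · simpa using hE 1
    · intro g k
      show V.te (g * k) = V.te g * V.te k
      have h1 : V.te (g * k) = V.te ((V.te g : G) * k) := by
        conv_lhs => rw [← V.t_fac g, mul_assoc]
        exact hMl _ _
      have h2 : V.se ((V.te g : G) * k) = V.te g * V.se k :=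
        ((V.s_uniq ((V.te g : G) * k) (V.te g * V.se k) (V.sm k)
          (by push_cast; rw [mul_assoc, V.s_fac])).1).symm
      rw [h1, h, h2, ← h k]
end

section
/- Fubini theorem for ends: Let A, B be categories with variance, (R₁,L₁), (R₂,L₂) spans on A and B, and F : A × B → C a functor of variance for the product variance. Suppose the end ∫_{L₁} F^b exists for every object b of B, with universal wedges ω^b, yielding the functor of variance ∫_{L₁}F : B → C. Then the transposition (c, θ : c ⇒_{L₂} ∫_{L₁}F) ↦ (c, θ̃) with θ̃_{(x,y)} = ω^{L₂(y)}_x ∘ θ_y is an isomorphism between the category of L₂-wedges of ∫_{L₁}F and the category of (L₁×L₂)-wedges of F; in particular ∫_{L₁×L₂} F exists iff ∫_{L₂}∫_{L₁}F exists, and they agree. -/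
open CategoryTheory

universe v u v₂ u₂ v₃ u₃ v₄ u₄

/-- An `L`-wedge on a functor of variance `F`: an object `pt` together with morphisms
`η x : pt ⟶ F(L x)` such that `F(L(f)^e) ∘ η x = F(L(f)^m) ∘ η y` for every `f : x ⟶ y`. -/
structure Wedge {A : Type u} [Category.{v} A] {CC : Type u₂} [Category.{v₂} CC]
    (V : Variance A) (F : VFunctor V CC) {R : Type*} [Category R] (L : R ⥤ A) where
  pt : CC
  η : ∀ x : R, pt ⟶ F.obj (L.obj x)
  nat : ∀ {x y : R} (f : x ⟶ y),
    η x ≫ eqToHom (congrArg F.obj (V.sObj_of_E _ (V.te_mem (L.map f))).symm) ≫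
        F.map (V.te (L.map f)) ≫
        eqToHom (congrArg F.obj (V.tObj_of_E _ (V.te_mem (L.map f)))) =
      η y ≫ eqToHom (congrArg F.obj (V.sObj_of_M _ (V.tm_mem (L.map f))).symm) ≫
        F.map (V.tm (L.map f)) ≫
        eqToHom (congrArg F.obj (V.tObj_of_M _ (V.tm_mem (L.map f))))

instance Wedge.category {A : Type u} [Category.{v} A] {CC : Type u₂} [Category.{v₂} CC]
    {V : Variance A} {F : VFunctor V CC} {R : Type*} [Category R] {L : R ⥤ A} :
    Category (Wedge V F L) where
  Hom W₁ W₂ := { f : W₁.pt ⟶ W₂.pt // ∀ x : R, f ≫ W₂.η x = W₁.η x }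
  id W := ⟨𝟙 W.pt, fun x => Category.id_comp _⟩
  comp f g := ⟨f.1 ≫ g.1, fun x => by rw [Category.assoc, g.2, f.2]⟩
  id_comp f := Subtype.ext (Category.id_comp _)
  comp_id f := Subtype.ext (Category.comp_id _)
  assoc f g h := Subtype.ext (Category.assoc _ _ _)

/-!
An `(L₁ × L₂)`-wedge condition at `(f, g)` splits into a row and a column condition: the
terminating factorization of `(f, g)` is componentwise, `(f^e, g^e) = (f^e, 𝟙) ≫ (𝟙, g^e)`, and
the mixed functoriality of `F` lets `(f^m, 𝟙)` and `(𝟙, g^e)` be interchanged. So if `θ` is an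
`L₂`-wedge of `∫_{L₁} F`, then `θ̃_(x,y) = ω^(L₂ y)_x ∘ θ_y` is an `(L₁ × L₂)`-wedge: the row
condition is that of `ω`, the column condition that of `θ` transported along the parameter
naturality of `ω`. Conversely every column of an `(L₁ × L₂)`-wedge `Ω` is an `L₁`-wedge of
`F^(L₂ y)`, hence factors uniquely through `ω^(L₂ y)`; the factorizations form an `L₂`-wedge of
`∫_{L₁} F` because both sides of its wedge condition factor one and the same `L₁`-wedge through
the terminal wedge `ω`. The two constructions fix vertices and morphisms and are mutually
inverse, so they form an isomorphism of categories, which preserves terminal objects.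
-/

universe v₅ u₅

lemma CategoryTheory.Equivalence.exists_isTerminal_iff {C D : Type*} [Category C] [Category D]
    (e : C ≌ D) :
    (∃ X : C, Nonempty (Limits.IsTerminal X)) ↔ ∃ Y : D, Nonempty (Limits.IsTerminal Y) :=
  ⟨fun ⟨X, ⟨h⟩⟩ => ⟨_, ⟨h.isTerminalObj e.functor X⟩⟩,
    fun ⟨Y, ⟨h⟩⟩ => ⟨_, ⟨h.isTerminalObj e.inverse Y⟩⟩⟩

lemma comp_heq_comp {C : Type*} [Category C] {X Y Z X' Y' Z' : C}
    (hX : X = X') (hY : Y = Y') (hZ : Z = Z')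
    {f : X ⟶ Y} {g : Y ⟶ Z} {f' : X' ⟶ Y'} {g' : Y' ⟶ Z'}
    (hf : HEq f f') (hg : HEq g g') : HEq (f ≫ g) (f' ≫ g') := by
  subst hX hY hZ
  rw [eq_of_heq hf, eq_of_heq hg]

namespace Variance

variable {C : Type*} [Category C] (V : Variance C)

lemma t_uniq_heq {X Y Z : C} (f : X ⟶ Y) (e : X ⟶ Z) (m : Z ⟶ Y)
    (he : V.E e) (hm : V.M m) (hc : e ≫ m = f) :
    Z = V.tObj f ∧ HEq e (V.te f) ∧ HEq m (V.tm f) := by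
  obtain ⟨rfl, h⟩ := Sigma.mk.inj_iff.mp (V.t_uniq f Z e m he hm hc)
  obtain ⟨h₁, h₂⟩ := Prod.mk_inj.mp (eq_of_heq h)
  exact ⟨rfl, heq_of_eq h₁, heq_of_eq h₂⟩

lemma s_uniq_heq {X Y Z : C} (f : X ⟶ Y) (m : X ⟶ Z) (e : Z ⟶ Y)
    (hm : V.M m) (he : V.E e) (hc : m ≫ e = f) :
    Z = V.sObj f ∧ HEq m (V.sm f) ∧ HEq e (V.se f) := by
  obtain ⟨rfl, h⟩ := Sigma.mk.inj_iff.mp (V.s_uniq f Z m e hm he hc)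
  obtain ⟨h₁, h₂⟩ := Prod.mk_inj.mp (eq_of_heq h)
  exact ⟨rfl, heq_of_eq h₁, heq_of_eq h₂⟩

lemma te_heq_of_E {X Y : C} (f : X ⟶ Y) (h : V.E f) : HEq (V.te f) f :=
  (V.t_uniq_heq f f (𝟙 Y) h (V.M_id Y) (Category.comp_id f)).2.1.symm

lemma tm_heq_id_of_E {X Y : C} (f : X ⟶ Y) (h : V.E f) : HEq (V.tm f) (𝟙 Y) :=
  (V.t_uniq_heq f f (𝟙 Y) h (V.M_id Y) (Category.comp_id f)).2.2.symm

lemma te_heq_id_of_M {X Y : C} (f : X ⟶ Y) (h : V.M f) : HEq (V.te f) (𝟙 X) :=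
  (V.t_uniq_heq f (𝟙 X) f (V.E_id X) h (Category.id_comp f)).2.1.symm

lemma tm_heq_of_M {X Y : C} (f : X ⟶ Y) (h : V.M f) : HEq (V.tm f) f :=
  (V.t_uniq_heq f (𝟙 X) f (V.E_id X) h (Category.id_comp f)).2.2.symm

lemma sm_heq_of_M {X Y : C} (f : X ⟶ Y) (h : V.M f) : HEq (V.sm f) f :=
  (V.s_uniq_heq f f (𝟙 Y) h (V.E_id Y) (Category.comp_id f)).2.1.symm

lemma se_heq_id_of_M {X Y : C} (f : X ⟶ Y) (h : V.M f) : HEq (V.se f) (𝟙 Y) :=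
  (V.s_uniq_heq f f (𝟙 Y) h (V.E_id Y) (Category.comp_id f)).2.2.symm

lemma sm_heq_id_of_E {X Y : C} (f : X ⟶ Y) (h : V.E f) : HEq (V.sm f) (𝟙 X) :=
  (V.s_uniq_heq f (𝟙 X) f (V.M_id X) h (Category.id_comp f)).2.1.symm

lemma se_heq_of_E {X Y : C} (f : X ⟶ Y) (h : V.E f) : HEq (V.se f) f :=
  (V.s_uniq_heq f (𝟙 X) f (V.M_id X) h (Category.id_comp f)).2.2.symm

section Congr

variable {X Y X' Y' : C} {f : X ⟶ Y} {f' : X' ⟶ Y'}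

lemma sObj_congr (hX : X = X') (hY : Y = Y') (hf : HEq f f') : V.sObj f = V.sObj f' := by
  subst hX hY; rw [eq_of_heq hf]

lemma tObj_congr (hX : X = X') (hY : Y = Y') (hf : HEq f f') : V.tObj f = V.tObj f' := by
  subst hX hY; rw [eq_of_heq hf]

lemma sm_congr (hX : X = X') (hY : Y = Y') (hf : HEq f f') : HEq (V.sm f) (V.sm f') := by
  subst hX hY; rw [eq_of_heq hf]

lemma se_congr (hX : X = X') (hY : Y = Y') (hf : HEq f f') : HEq (V.se f) (V.se f') := by
  subst hX hY; rw [eq_of_heq hf]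

lemma te_congr (hX : X = X') (hY : Y = Y') (hf : HEq f f') : HEq (V.te f) (V.te f') := by
  subst hX hY; rw [eq_of_heq hf]

lemma tm_congr (hX : X = X') (hY : Y = Y') (hf : HEq f f') : HEq (V.tm f) (V.tm f') := by
  subst hX hY; rw [eq_of_heq hf]

end Congr

end Variance

namespace VFunctor

variable {C : Type*} [Category C] {V : Variance C} {D : Type*} [Category D] (F : VFunctor V D)

/-- For `e ∈ E` we have `e_s = X` and `e_t = Y`, so `F` acts covariantly on `E`. -/
def emap {X Y : C} (e : X ⟶ Y) (he : V.E e) : F.obj X ⟶ F.obj Y :=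
  eqToHom (congrArg F.obj (V.sObj_of_E e he).symm) ≫ F.map e ≫
    eqToHom (congrArg F.obj (V.tObj_of_E e he))

/-- For `m ∈ M` we have `m_s = Y` and `m_t = X`, so `F` acts contravariantly on `M`. -/
def mmap {X Y : C} (m : X ⟶ Y) (hm : V.M m) : F.obj Y ⟶ F.obj X :=
  eqToHom (congrArg F.obj (V.sObj_of_M m hm).symm) ≫ F.map m ≫
    eqToHom (congrArg F.obj (V.tObj_of_M m hm))

lemma map_eq_of_E {X Y : C} (e : X ⟶ Y) (he : V.E e) :
    F.map e = eqToHom (congrArg F.obj (V.sObj_of_E e he)) ≫ F.emap e he ≫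
      eqToHom (congrArg F.obj (V.tObj_of_E e he).symm) := by
  simp [emap]

lemma map_eq_of_M {X Y : C} (m : X ⟶ Y) (hm : V.M m) :
    F.map m = eqToHom (congrArg F.obj (V.sObj_of_M m hm)) ≫ F.mmap m hm ≫
      eqToHom (congrArg F.obj (V.tObj_of_M m hm).symm) := by
  simp [mmap]

lemma map_congr {X Y X' Y' : C} (f : X ⟶ Y) (f' : X' ⟶ Y')
    (hX : X = X') (hY : Y = Y') (hf : HEq f f') :
    F.map f = eqToHom (congrArg F.obj (V.sObj_congr hX hY hf)) ≫ F.map f' ≫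
      eqToHom (congrArg F.obj (V.tObj_congr hX hY hf).symm) := by
  subst hX hY; cases eq_of_heq hf; simp

lemma emap_congr {X Y X' Y' : C} (e : X ⟶ Y) (e' : X' ⟶ Y')
    (hX : X = X') (hY : Y = Y') (hf : HEq e e') (he : V.E e) (he' : V.E e') :
    F.emap e he = eqToHom (congrArg F.obj hX) ≫ F.emap e' he' ≫
      eqToHom (congrArg F.obj hY.symm) := by
  subst hX hY; cases eq_of_heq hf; simp

lemma mmap_congr {X Y X' Y' : C} (m : X ⟶ Y) (m' : X' ⟶ Y')
    (hX : X = X') (hY : Y = Y') (hf : HEq m m') (hm : V.M m) (hm' : V.M m') :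
    F.mmap m hm = eqToHom (congrArg F.obj hY) ≫ F.mmap m' hm' ≫
      eqToHom (congrArg F.obj hX.symm) := by
  subst hX hY; cases eq_of_heq hf; simp

@[simp] lemma emap_id (X : C) (h : V.E (𝟙 X)) : F.emap (𝟙 X) h = 𝟙 (F.obj X) := by
  simp [emap, F.map_id]

lemma emap_comp {X Y Z : C} (e : X ⟶ Y) (e' : Y ⟶ Z) (he : V.E e) (he' : V.E e') :
    F.emap (e ≫ e') (V.E_comp e e' he he') = F.emap e he ≫ F.emap e' he' := by
  have hk : HEq (V.se e ≫ V.sm e') e :=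
    (comp_heq_comp (V.sObj_of_E e he) rfl (V.sObj_of_E e' he')
      (V.se_heq_of_E e he) (V.sm_heq_id_of_E e' he')).trans (heq_of_eq (Category.comp_id e))
  have hl : HEq (V.tm e ≫ V.te e') e' :=
    (comp_heq_comp (V.tObj_of_E e he) rfl (V.tObj_of_E e' he')
      (V.tm_heq_id_of_E e he) (V.te_heq_of_E e' he')).trans (heq_of_eq (Category.id_comp e'))
  rw [emap, F.map_comp₁ e e',
    F.map_congr (V.sm (V.se e ≫ V.sm e')) (𝟙 X) (V.sObj_of_E e he)
      ((V.sObj_congr (V.sObj_of_E e he) (V.sObj_of_E e' he') hk).trans (V.sObj_of_E e he))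
      ((V.sm_congr (V.sObj_of_E e he) (V.sObj_of_E e' he') hk).trans (V.sm_heq_id_of_E e he)),
    F.map_congr (V.te (V.tm e ≫ V.te e')) e' (V.tObj_of_E e he)
      ((V.tObj_congr (V.tObj_of_E e he) (V.tObj_of_E e' he') hl).trans (V.tObj_of_E e' he'))
      ((V.te_congr (V.tObj_of_E e he) (V.tObj_of_E e' he') hl).trans (V.te_heq_of_E e' he')),
    F.map_id, F.map_eq_of_E e he, F.map_eq_of_E e' he']
  simp

lemma mmap_comp {X Y Z : C} (m : X ⟶ Y) (m' : Y ⟶ Z) (hm : V.M m) (hm' : V.M m') :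
    F.mmap (m ≫ m') (V.M_comp m m' hm hm') = F.mmap m' hm' ≫ F.mmap m hm := by
  have hk : HEq (V.se m ≫ V.sm m') m' :=
    (comp_heq_comp (V.sObj_of_M m hm) rfl (V.sObj_of_M m' hm')
      (V.se_heq_id_of_M m hm) (V.sm_heq_of_M m' hm')).trans (heq_of_eq (Category.id_comp m'))
  have hl : HEq (V.tm m ≫ V.te m') m :=
    (comp_heq_comp (V.tObj_of_M m hm) rfl (V.tObj_of_M m' hm')
      (V.tm_heq_of_M m hm) (V.te_heq_id_of_M m' hm')).trans (heq_of_eq (Category.comp_id m))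
  rw [mmap, F.map_comp₂ m m',
    F.map_congr (V.se (V.se m ≫ V.sm m')) (𝟙 Z)
      ((V.sObj_congr (V.sObj_of_M m hm) (V.sObj_of_M m' hm') hk).trans (V.sObj_of_M m' hm'))
      (V.sObj_of_M m' hm')
      ((V.se_congr (V.sObj_of_M m hm) (V.sObj_of_M m' hm') hk).trans (V.se_heq_id_of_M m' hm')),
    F.map_congr (V.tm (V.tm m ≫ V.te m')) m
      ((V.tObj_congr (V.tObj_of_M m hm) (V.tObj_of_M m' hm') hl).trans (V.tObj_of_M m hm))
      (V.tObj_of_M m' hm')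
      ((V.tm_congr (V.tObj_of_M m hm) (V.tObj_of_M m' hm') hl).trans (V.tm_heq_of_M m hm)),
    F.map_id, F.map_eq_of_M m hm, F.map_eq_of_M m' hm']
  simp

lemma emap_eq_comp {X Y Z : C} (e : X ⟶ Y) (e' : Y ⟶ Z) (e'' : X ⟶ Z)
    (hc : e'' = e ≫ e') (he : V.E e) (he' : V.E e') (he'' : V.E e'') :
    F.emap e'' he'' = F.emap e he ≫ F.emap e' he' := by
  subst hc; exact F.emap_comp e e' he he'

lemma mmap_eq_comp {X Y Z : C} (m : X ⟶ Y) (m' : Y ⟶ Z) (m'' : X ⟶ Z)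
    (hc : m'' = m ≫ m') (hm : V.M m) (hm' : V.M m') (hm'' : V.M m'') :
    F.mmap m'' hm'' = F.mmap m' hm' ≫ F.mmap m hm := by
  subst hc; exact F.mmap_comp m m' hm hm'

/-- Both sides are `F(f ≫ g)`, read off from `map_comp₁` and from `map_comp₂`. -/
lemma emap_comp_mmap_tm {X Y Z : C} (f : X ⟶ Y) (g : Y ⟶ Z) (hf : V.M f) (hg : V.E g) :
    F.emap g hg ≫ F.mmap (V.tm (f ≫ g)) (V.tm_mem _) =
      F.mmap f hf ≫ F.emap (V.te (f ≫ g)) (V.te_mem _) := by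
  have hk : HEq (V.se f ≫ V.sm g) (𝟙 Y) :=
    (comp_heq_comp (V.sObj_of_M f hf) rfl (V.sObj_of_E g hg)
      (V.se_heq_id_of_M f hf) (V.sm_heq_id_of_E g hg)).trans
      (heq_of_eq (Category.comp_id (𝟙 Y)))
  have hkY : V.sObj (V.se f ≫ V.sm g) = Y :=
    (V.sObj_congr (V.sObj_of_M f hf) (V.sObj_of_E g hg) hk).trans (V.sObj_id Y)
  have hA : V.sObj (f ≫ g) = Y := (V.sObj_comp f g).trans hkY
  have hl : HEq (V.tm f ≫ V.te g) (f ≫ g) :=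
    comp_heq_comp (V.tObj_of_M f hf) rfl (V.tObj_of_E g hg)
      (V.tm_heq_of_M f hf) (V.te_heq_of_E g hg)
  have h₁ : F.map (f ≫ g) =
      eqToHom (congrArg F.obj hA) ≫ F.mmap f hf ≫ F.emap (V.te (f ≫ g)) (V.te_mem _) := by
    rw [F.map_comp₁ f g,
      F.map_congr (V.sm (V.se f ≫ V.sm g)) (𝟙 Y) (V.sObj_of_M f hf) hkY
        ((V.sm_congr (V.sObj_of_M f hf) (V.sObj_of_E g hg) hk).trans
          (V.sm_heq_id_of_E (𝟙 Y) (V.E_id Y))),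
      F.map_congr (V.te (V.tm f ≫ V.te g)) (V.te (f ≫ g)) (V.tObj_of_M f hf)
        (V.tObj_comp f g).symm (V.te_congr (V.tObj_of_M f hf) (V.tObj_of_E g hg) hl),
      F.map_id, F.map_eq_of_M f hf, F.map_eq_of_E (V.te (f ≫ g)) (V.te_mem _)]
    simp
  have h₂ : F.map (f ≫ g) =
      eqToHom (congrArg F.obj hA) ≫ F.emap g hg ≫ F.mmap (V.tm (f ≫ g)) (V.tm_mem _) := by
    rw [F.map_comp₂ f g,
      F.map_congr (V.se (V.se f ≫ V.sm g)) (𝟙 Y) hkY (V.sObj_of_E g hg)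
        ((V.se_congr (V.sObj_of_M f hf) (V.sObj_of_E g hg) hk).trans
          (V.se_heq_of_E (𝟙 Y) (V.E_id Y))),
      F.map_congr (V.tm (V.tm f ≫ V.te g)) (V.tm (f ≫ g))
        (V.tObj_comp f g).symm (V.tObj_of_E g hg)
        (V.tm_congr (V.tObj_of_M f hf) (V.tObj_of_E g hg) hl),
      F.map_id, F.map_eq_of_E g hg, F.map_eq_of_M (V.tm (f ≫ g)) (V.tm_mem _)]
    simp
  exact (cancel_epi (eqToHom (congrArg F.obj hA))).1 (h₂.symm.trans h₁)

end VFunctor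

namespace Wedge

variable {A : Type*} [Category A] {CC : Type*} [Category CC]
    {V : Variance A} {F : VFunctor V CC} {R : Type*} [Category R] {L : R ⥤ A}

lemma nat_emap (W : Wedge V F L) {x y : R} (f : x ⟶ y) :
    W.η x ≫ F.emap (V.te (L.map f)) (V.te_mem _) =
      W.η y ≫ F.mmap (V.tm (L.map f)) (V.tm_mem _) := by
  simpa [VFunctor.emap, VFunctor.mmap] using W.nat f

/-- Reducible, so that `simp` sees through the vertex of `mk' pt η h` to `pt`. -/
abbrev mk' (pt : CC) (η : ∀ x : R, pt ⟶ F.obj (L.obj x))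
    (h : ∀ {x y : R} (f : x ⟶ y),
      η x ≫ F.emap (V.te (L.map f)) (V.te_mem _) =
        η y ≫ F.mmap (V.tm (L.map f)) (V.tm_mem _)) : Wedge V F L :=
  ⟨pt, η, fun f => by simpa [VFunctor.emap, VFunctor.mmap] using h f⟩

@[simp] lemma mk'_η (pt η h) (x : R) : (mk' (V := V) (F := F) (L := L) pt η h).η x = η x := rfl

lemma ext_heq {W₁ W₂ : Wedge V F L} (hpt : W₁.pt = W₂.pt) (hη : ∀ x, HEq (W₁.η x) (W₂.η x)) :
    W₁ = W₂ := by
  obtain ⟨p₁, η₁, _⟩ := W₁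
  obtain ⟨p₂, η₂, _⟩ := W₂
  cases hpt
  obtain rfl : η₁ = η₂ := funext fun x => eq_of_heq (hη x)
  rfl

lemma hom_heq {W₁ W₂ W₁' W₂' : Wedge V F L} (h₁ : W₁ = W₁') (h₂ : W₂ = W₂')
    {f : W₁ ⟶ W₂} {f' : W₁' ⟶ W₂'} (hf : HEq f.1 f'.1) : HEq f f' := by
  subst h₁ h₂
  exact heq_of_eq (Subtype.ext (eq_of_heq hf))

end Wedge

structure Variance.IsProduct {A : Type*} [Category A] {B : Type*} [Category B]
    (Vp : Variance (A × B)) (VA : Variance A) (VB : Variance B) : Prop where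
  E_iff : ∀ {p q : A × B} (φ : p ⟶ q), Vp.E φ ↔ VA.E φ.1 ∧ VB.E φ.2
  M_iff : ∀ {p q : A × B} (φ : p ⟶ q), Vp.M φ ↔ VA.M φ.1 ∧ VB.M φ.2
  sObj_eq : ∀ {p q : A × B} (φ : p ⟶ q), Vp.sObj φ = (VA.sObj φ.1, VB.sObj φ.2)
  tObj_eq : ∀ {p q : A × B} (φ : p ⟶ q), Vp.tObj φ = (VA.tObj φ.1, VB.tObj φ.2)

section Product

variable {A : Type*} [Category A] {B : Type*} [Category B]

lemma prod_hom_heq_of_cod {a a' u : A} {b b' v : B} {f₁ : a ⟶ a'} {g₁ : a ⟶ u}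
    {f₂ : b ⟶ b'} {g₂ : b ⟶ v} (h₁ : u = a') (h₂ : v = b')
    (hf : HEq g₁ f₁) (hg : HEq g₂ f₂) :
    HEq ((g₁, g₂) : ((a, b) : A × B) ⟶ (u, v)) ((f₁, f₂) : ((a, b) : A × B) ⟶ (a', b')) := by
  subst h₁ h₂; rw [eq_of_heq hf, eq_of_heq hg]

lemma prod_hom_heq_of_dom {a a' u : A} {b b' v : B} {f₁ : a ⟶ a'} {g₁ : u ⟶ a'}
    {f₂ : b ⟶ b'} {g₂ : v ⟶ b'} (h₁ : u = a) (h₂ : v = b)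
    (hf : HEq g₁ f₁) (hg : HEq g₂ f₂) :
    HEq ((g₁, g₂) : ((u, v) : A × B) ⟶ (a', b')) ((f₁, f₂) : ((a, b) : A × B) ⟶ (a', b')) := by
  subst h₁ h₂; rw [eq_of_heq hf, eq_of_heq hg]

lemma VFunctor.emap_pair_id {D : Type*} [Category D] {Vp : Variance (A × B)}
    (F : VFunctor Vp D) (a : A) (b : B) (h : Vp.E ((𝟙 a, 𝟙 b) : ((a, b) : A × B) ⟶ (a, b))) :
    F.emap ((𝟙 a, 𝟙 b) : ((a, b) : A × B) ⟶ (a, b)) h = 𝟙 (F.obj (a, b)) :=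
  F.emap_id (a, b) h

namespace Variance.IsProduct

variable {D : Type*} [Category D] {Vp : Variance (A × B)} {VA : Variance A} {VB : Variance B}
  (hp : Vp.IsProduct VA VB) (F : VFunctor Vp D)
include hp

lemma E_pair {a a' : A} {b b' : B} {e₁ : a ⟶ a'} {e₂ : b ⟶ b'} (h₁ : VA.E e₁) (h₂ : VB.E e₂) :
    Vp.E ((e₁, e₂) : ((a, b) : A × B) ⟶ (a', b')) := (hp.E_iff _).2 ⟨h₁, h₂⟩

lemma M_pair {a a' : A} {b b' : B} {m₁ : a ⟶ a'} {m₂ : b ⟶ b'} (h₁ : VA.M m₁) (h₂ : VB.M m₂) :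
    Vp.M ((m₁, m₂) : ((a, b) : A × B) ⟶ (a', b')) := (hp.M_iff _).2 ⟨h₁, h₂⟩

lemma te_pair_heq {a a' : A} {b b' : B} (φ₁ : a ⟶ a') (φ₂ : b ⟶ b') :
    HEq (Vp.te ((φ₁, φ₂) : ((a, b) : A × B) ⟶ (a', b')))
      ((VA.te φ₁, VB.te φ₂) : ((a, b) : A × B) ⟶ (VA.tObj φ₁, VB.tObj φ₂)) :=
  (Vp.t_uniq_heq _ _ ((VA.tm φ₁, VB.tm φ₂) : ((VA.tObj φ₁, VB.tObj φ₂) : A × B) ⟶ (a', b'))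
    (hp.E_pair (VA.te_mem φ₁) (VB.te_mem φ₂)) (hp.M_pair (VA.tm_mem φ₁) (VB.tm_mem φ₂))
    (Prod.ext (VA.t_fac φ₁) (VB.t_fac φ₂))).2.1.symm

lemma tm_pair_heq {a a' : A} {b b' : B} (φ₁ : a ⟶ a') (φ₂ : b ⟶ b') :
    HEq (Vp.tm ((φ₁, φ₂) : ((a, b) : A × B) ⟶ (a', b')))
      ((VA.tm φ₁, VB.tm φ₂) : ((VA.tObj φ₁, VB.tObj φ₂) : A × B) ⟶ (a', b')) :=
  (Vp.t_uniq_heq _ ((VA.te φ₁, VB.te φ₂) : ((a, b) : A × B) ⟶ (VA.tObj φ₁, VB.tObj φ₂)) _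
    (hp.E_pair (VA.te_mem φ₁) (VB.te_mem φ₂)) (hp.M_pair (VA.tm_mem φ₁) (VB.tm_mem φ₂))
    (Prod.ext (VA.t_fac φ₁) (VB.t_fac φ₂))).2.2.symm

lemma emap_pair_eq_fst_comp_snd {a a' : A} {b b' : B} {e₁ : a ⟶ a'} {e₂ : b ⟶ b'}
    (h₁ : VA.E e₁) (h₂ : VB.E e₂) :
    F.emap ((e₁, e₂) : ((a, b) : A × B) ⟶ (a', b')) (hp.E_pair h₁ h₂) =
      F.emap ((e₁, 𝟙 b) : ((a, b) : A × B) ⟶ (a', b)) (hp.E_pair h₁ (VB.E_id b)) ≫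
        F.emap ((𝟙 a', e₂) : ((a', b) : A × B) ⟶ (a', b')) (hp.E_pair (VA.E_id a') h₂) :=
  F.emap_eq_comp _ _ _ (by simp [prod_comp]) _ _ _

lemma emap_pair_eq_snd_comp_fst {a a' : A} {b b' : B} {e₁ : a ⟶ a'} {e₂ : b ⟶ b'}
    (h₁ : VA.E e₁) (h₂ : VB.E e₂) :
    F.emap ((e₁, e₂) : ((a, b) : A × B) ⟶ (a', b')) (hp.E_pair h₁ h₂) =
      F.emap ((𝟙 a, e₂) : ((a, b) : A × B) ⟶ (a, b')) (hp.E_pair (VA.E_id a) h₂) ≫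
        F.emap ((e₁, 𝟙 b') : ((a, b') : A × B) ⟶ (a', b')) (hp.E_pair h₁ (VB.E_id b')) :=
  F.emap_eq_comp _ _ _ (by simp [prod_comp]) _ _ _

lemma mmap_pair_eq_snd_comp_fst {a a' : A} {b b' : B} {m₁ : a ⟶ a'} {m₂ : b ⟶ b'}
    (h₁ : VA.M m₁) (h₂ : VB.M m₂) :
    F.mmap ((m₁, m₂) : ((a, b) : A × B) ⟶ (a', b')) (hp.M_pair h₁ h₂) =
      F.mmap ((𝟙 a', m₂) : ((a', b) : A × B) ⟶ (a', b')) (hp.M_pair (VA.M_id a') h₂) ≫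
        F.mmap ((m₁, 𝟙 b) : ((a, b) : A × B) ⟶ (a', b)) (hp.M_pair h₁ (VB.M_id b)) :=
  F.mmap_eq_comp _ _ _ (by simp [prod_comp]) _ _ _

/-- The interchange law `emap_comp_mmap_tm` for `(m₁, 𝟙) ≫ (𝟙, e₂) = (m₁, e₂)`, whose terminating
factorization is `(𝟙, e₂) ≫ (m₁, 𝟙)`. -/
lemma mmap_fst_comp_emap_snd {u v : A} {b b' : B} {m₁ : u ⟶ v} {e₂ : b ⟶ b'}
    (hm₁ : VA.M m₁) (he₂ : VB.E e₂) :
    F.mmap ((m₁, 𝟙 b) : ((u, b) : A × B) ⟶ (v, b)) (hp.M_pair hm₁ (VB.M_id b)) ≫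
        F.emap ((𝟙 u, e₂) : ((u, b) : A × B) ⟶ (u, b')) (hp.E_pair (VA.E_id u) he₂) =
      F.emap ((𝟙 v, e₂) : ((v, b) : A × B) ⟶ (v, b')) (hp.E_pair (VA.E_id v) he₂) ≫
        F.mmap ((m₁, 𝟙 b') : ((u, b') : A × B) ⟶ (v, b')) (hp.M_pair hm₁ (VB.M_id b')) := by
  have hs := F.emap_comp_mmap_tm ((m₁, 𝟙 b) : ((u, b) : A × B) ⟶ (v, b))
    ((𝟙 v, e₂) : ((v, b) : A × B) ⟶ (v, b'))
    (hp.M_pair hm₁ (VB.M_id b)) (hp.E_pair (VA.E_id v) he₂)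
  have hcomp : (((m₁, 𝟙 b) : ((u, b) : A × B) ⟶ (v, b)) ≫
      ((𝟙 v, e₂) : ((v, b) : A × B) ⟶ (v, b')) : ((u, b) : A × B) ⟶ (v, b')) =
      ((m₁, e₂) : ((u, b) : A × B) ⟶ (v, b')) := by simp [prod_comp]
  rw [hcomp] at hs
  have hT : Vp.tObj ((m₁, e₂) : ((u, b) : A × B) ⟶ (v, b')) = (u, b') :=
    (hp.tObj_eq _).trans (Prod.ext (VA.tObj_of_M m₁ hm₁) (VB.tObj_of_E e₂ he₂))
  rw [F.emap_congr _ ((𝟙 u, e₂) : ((u, b) : A × B) ⟶ (u, b')) rfl hT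
      ((hp.te_pair_heq m₁ e₂).trans (prod_hom_heq_of_cod (VA.tObj_of_M m₁ hm₁)
        (VB.tObj_of_E e₂ he₂) (VA.te_heq_id_of_M m₁ hm₁) (VB.te_heq_of_E e₂ he₂)))
      (Vp.te_mem _) (hp.E_pair (VA.E_id u) he₂),
    F.mmap_congr _ ((m₁, 𝟙 b') : ((u, b') : A × B) ⟶ (v, b')) hT rfl
      ((hp.tm_pair_heq m₁ e₂).trans (prod_hom_heq_of_dom (VA.tObj_of_M m₁ hm₁)
        (VB.tObj_of_E e₂ he₂) (VA.tm_heq_of_M m₁ hm₁) (VB.tm_heq_id_of_E e₂ he₂)))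
      (Vp.tm_mem _) (hp.M_pair hm₁ (VB.M_id b'))] at hs
  simp only [eqToHom_refl, Category.id_comp, ← Category.assoc] at hs
  exact ((cancel_mono _).1 hs).symm

variable {R₁ : Type*} [Category R₁] {R₂ : Type*} [Category R₂] {L₁ : R₁ ⥤ A} {L₂ : R₂ ⥤ B}

lemma prod_nat_iff {pt : D} (η : ∀ p : R₁ × R₂, pt ⟶ F.obj ((L₁.prod L₂).obj p))
    {x x' : R₁} {y y' : R₂} (f : x ⟶ x') (g : y ⟶ y') :
    (η (x, y) ≫ F.emap (Vp.te ((L₁.map f, L₂.map g) :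
          ((L₁.obj x, L₂.obj y) : A × B) ⟶ (L₁.obj x', L₂.obj y'))) (Vp.te_mem _) =
      η (x', y') ≫ F.mmap (Vp.tm ((L₁.map f, L₂.map g) :
          ((L₁.obj x, L₂.obj y) : A × B) ⟶ (L₁.obj x', L₂.obj y'))) (Vp.tm_mem _)) ↔
    (η (x, y) ≫ F.emap
        ((VA.te (L₁.map f), VB.te (L₂.map g)) :
          ((L₁.obj x, L₂.obj y) : A × B) ⟶ (VA.tObj (L₁.map f), VB.tObj (L₂.map g)))
        (hp.E_pair (VA.te_mem _) (VB.te_mem _)) =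
      η (x', y') ≫ F.mmap
        ((VA.tm (L₁.map f), VB.tm (L₂.map g)) :
          ((VA.tObj (L₁.map f), VB.tObj (L₂.map g)) : A × B) ⟶ (L₁.obj x', L₂.obj y'))
        (hp.M_pair (VA.tm_mem _) (VB.tm_mem _))) := by
  rw [F.emap_congr _ _ rfl (hp.tObj_eq _) (hp.te_pair_heq _ _) (Vp.te_mem _)
      (hp.E_pair (VA.te_mem _) (VB.te_mem _)),
    F.mmap_congr _ _ (hp.tObj_eq _) rfl (hp.tm_pair_heq _ _) (Vp.tm_mem _)
      (hp.M_pair (VA.tm_mem _) (VB.tm_mem _))]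
  simp only [eqToHom_refl, Category.id_comp, ← Category.assoc]
  exact cancel_mono _

lemma wedge_nat_fst (Ω : Wedge Vp F (L₁.prod L₂)) {x x' : R₁} (f : x ⟶ x') (y : R₂) :
    Ω.η (x, y) ≫ F.emap
        ((VA.te (L₁.map f), 𝟙 (L₂.obj y)) :
          ((L₁.obj x, L₂.obj y) : A × B) ⟶ (VA.tObj (L₁.map f), L₂.obj y))
        (hp.E_pair (VA.te_mem _) (VB.E_id _)) =
      Ω.η (x', y) ≫ F.mmap
        ((VA.tm (L₁.map f), 𝟙 (L₂.obj y)) :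
          ((VA.tObj (L₁.map f), L₂.obj y) : A × B) ⟶ (L₁.obj x', L₂.obj y))
        (hp.M_pair (VA.tm_mem _) (VB.M_id _)) := by
  have h := (hp.prod_nat_iff F Ω.η f (𝟙 y)).1 (Ω.nat_emap ((f, 𝟙 y) : (x, y) ⟶ (x', y)))
  rw [L₂.map_id] at h
  rw [F.emap_congr ((VA.te (L₁.map f), VB.te (𝟙 (L₂.obj y))) :
        ((L₁.obj x, L₂.obj y) : A × B) ⟶ (VA.tObj (L₁.map f), VB.tObj (𝟙 (L₂.obj y))))
      ((VA.te (L₁.map f), 𝟙 (L₂.obj y)) :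
        ((L₁.obj x, L₂.obj y) : A × B) ⟶ (VA.tObj (L₁.map f), L₂.obj y)) rfl
      (Prod.ext rfl (VB.tObj_id _))
      (prod_hom_heq_of_cod rfl (VB.tObj_id _) .rfl (VB.te_heq_of_E _ (VB.E_id _)))
      _ (hp.E_pair (VA.te_mem _) (VB.E_id _)),
    F.mmap_congr ((VA.tm (L₁.map f), VB.tm (𝟙 (L₂.obj y))) :
        ((VA.tObj (L₁.map f), VB.tObj (𝟙 (L₂.obj y))) : A × B) ⟶ (L₁.obj x', L₂.obj y))
      ((VA.tm (L₁.map f), 𝟙 (L₂.obj y)) :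
        ((VA.tObj (L₁.map f), L₂.obj y) : A × B) ⟶ (L₁.obj x', L₂.obj y))
      (Prod.ext rfl (VB.tObj_id _)) rfl
      (prod_hom_heq_of_dom rfl (VB.tObj_id _) .rfl (VB.tm_heq_id_of_E _ (VB.E_id _)))
      _ (hp.M_pair (VA.tm_mem _) (VB.M_id _))] at h
  simp only [eqToHom_refl, Category.id_comp, ← Category.assoc] at h
  exact (cancel_mono _).1 h

lemma wedge_nat_snd (Ω : Wedge Vp F (L₁.prod L₂)) (x : R₁) {y y' : R₂} (g : y ⟶ y') :
    Ω.η (x, y) ≫ F.emap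
        ((𝟙 (L₁.obj x), VB.te (L₂.map g)) :
          ((L₁.obj x, L₂.obj y) : A × B) ⟶ (L₁.obj x, VB.tObj (L₂.map g)))
        (hp.E_pair (VA.E_id _) (VB.te_mem _)) =
      Ω.η (x, y') ≫ F.mmap
        ((𝟙 (L₁.obj x), VB.tm (L₂.map g)) :
          ((L₁.obj x, VB.tObj (L₂.map g)) : A × B) ⟶ (L₁.obj x, L₂.obj y'))
        (hp.M_pair (VA.M_id _) (VB.tm_mem _)) := by
  have h := (hp.prod_nat_iff F Ω.η (𝟙 x) g).1 (Ω.nat_emap ((𝟙 x, g) : (x, y) ⟶ (x, y')))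
  rw [L₁.map_id] at h
  rw [F.emap_congr ((VA.te (𝟙 (L₁.obj x)), VB.te (L₂.map g)) :
        ((L₁.obj x, L₂.obj y) : A × B) ⟶ (VA.tObj (𝟙 (L₁.obj x)), VB.tObj (L₂.map g)))
      ((𝟙 (L₁.obj x), VB.te (L₂.map g)) :
        ((L₁.obj x, L₂.obj y) : A × B) ⟶ (L₁.obj x, VB.tObj (L₂.map g))) rfl
      (Prod.ext (VA.tObj_id _) rfl)
      (prod_hom_heq_of_cod (VA.tObj_id _) rfl (VA.te_heq_of_E _ (VA.E_id _)) .rfl)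
      _ (hp.E_pair (VA.E_id _) (VB.te_mem _)),
    F.mmap_congr ((VA.tm (𝟙 (L₁.obj x)), VB.tm (L₂.map g)) :
        ((VA.tObj (𝟙 (L₁.obj x)), VB.tObj (L₂.map g)) : A × B) ⟶ (L₁.obj x, L₂.obj y'))
      ((𝟙 (L₁.obj x), VB.tm (L₂.map g)) :
        ((L₁.obj x, VB.tObj (L₂.map g)) : A × B) ⟶ (L₁.obj x, L₂.obj y'))
      (Prod.ext (VA.tObj_id _) rfl) rfl
      (prod_hom_heq_of_dom (VA.tObj_id _) rfl (VA.tm_heq_id_of_E _ (VA.E_id _)) .rfl)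
      _ (hp.M_pair (VA.M_id _) (VB.tm_mem _))] at h
  simp only [eqToHom_refl, Category.id_comp, ← Category.assoc] at h
  exact (cancel_mono _).1 h

end Variance.IsProduct

end Product

/-- The data of the Fubini theorem: `Fb b` is the partial functor `F^b`, `W b` is the universal
wedge `ω^b` of `∫_{L₁} F^b`, and `G` is `∫_{L₁} F` with the action on morphisms given by the
parameter theorem (`G_map`). -/
structure FubiniData {A : Type*} [Category A] {B : Type*} [Category B]
    (CC : Type*) [Category CC] {R₁ : Type*} [Category R₁]
    (VA : Variance A) (VB : Variance B) (Vp : Variance (A × B)) (L₁ : R₁ ⥤ A) where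
  prod : Vp.IsProduct VA VB
  F : VFunctor Vp CC
  Fb : B → VFunctor VA CC
  Fb_obj : ∀ (a : A) (b : B), (Fb b).obj a = F.obj (a, b)
  Fb_map : ∀ {a a' : A} (f : a ⟶ a') (b : B),
      (Fb b).map f =
        eqToHom (by rw [Fb_obj, prod.sObj_eq ((f, 𝟙 b) : (a, b) ⟶ (a', b)), VB.sObj_id]) ≫
          F.map ((f, 𝟙 b) : (a, b) ⟶ (a', b)) ≫
          eqToHom (by rw [Fb_obj, prod.tObj_eq ((f, 𝟙 b) : (a, b) ⟶ (a', b)), VB.tObj_id])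
  W : ∀ b : B, Wedge VA (Fb b) L₁
  W_isTerminal : ∀ b : B, Nonempty (Limits.IsTerminal (W b))
  G : VFunctor VB CC
  G_obj : ∀ b : B, G.obj b = (W b).pt
  G_map : ∀ (a : R₁) {b b' : B} (g : b ⟶ b'),
      eqToHom (G_obj (VB.sObj g)).symm ≫ G.map g ≫ eqToHom (G_obj (VB.tObj g)) ≫
          (W (VB.tObj g)).η a =
        (W (VB.sObj g)).η a ≫
          eqToHom (by
            rw [Fb_obj, prod.sObj_eq ((𝟙 (L₁.obj a), g) : (L₁.obj a, b) ⟶ (L₁.obj a, b')),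
              VA.sObj_id]) ≫
          F.map ((𝟙 (L₁.obj a), g) : (L₁.obj a, b) ⟶ (L₁.obj a, b')) ≫
          eqToHom (by
            rw [Fb_obj, prod.tObj_eq ((𝟙 (L₁.obj a), g) : (L₁.obj a, b) ⟶ (L₁.obj a, b')),
              VA.tObj_id])

namespace FubiniData

variable {A : Type u} [Category.{v} A] {B : Type u₂} [Category.{v₂} B]
  {CC : Type u₃} [Category.{v₃} CC] {R₁ : Type u₄} [Category.{v₄} R₁]
  {R₂ : Type u₅} [Category.{v₅} R₂]
  {VA : Variance A} {VB : Variance B} {Vp : Variance (A × B)}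
  {L₁ : R₁ ⥤ A} {L₂ : R₂ ⥤ B} (S : FubiniData CC VA VB Vp L₁)

lemma W_η_congr {b₁ b₂ : B} (h : b₁ = b₂) (a : R₁) :
    (S.W b₁).η a = eqToHom (congrArg (fun c => (S.W c).pt) h) ≫ (S.W b₂).η a ≫
      eqToHom (congrArg (fun c => (S.Fb c).obj (L₁.obj a)) h.symm) := by
  subst h; simp

lemma Fb_emap {a a' : A} (e : a ⟶ a') (he : VA.E e) (b : B) :
    (S.Fb b).emap e he = eqToHom (S.Fb_obj a b) ≫
      S.F.emap (e, 𝟙 b) (S.prod.E_pair he (VB.E_id b)) ≫ eqToHom (S.Fb_obj a' b).symm := by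
  simp [VFunctor.emap, S.Fb_map e b]

lemma Fb_mmap {a a' : A} (m : a ⟶ a') (hm : VA.M m) (b : B) :
    (S.Fb b).mmap m hm = eqToHom (S.Fb_obj a' b) ≫
      S.F.mmap (m, 𝟙 b) (S.prod.M_pair hm (VB.M_id b)) ≫ eqToHom (S.Fb_obj a b).symm := by
  simp [VFunctor.mmap, S.Fb_map m b]

lemma G_emap_comp_η {b b' : B} (e : b ⟶ b') (he : VB.E e) (a : R₁) :
    S.G.emap e he ≫ eqToHom (S.G_obj b') ≫ (S.W b').η a ≫ eqToHom (S.Fb_obj (L₁.obj a) b') =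
      eqToHom (S.G_obj b) ≫ (S.W b).η a ≫ eqToHom (S.Fb_obj (L₁.obj a) b) ≫
        S.F.emap (𝟙 (L₁.obj a), e) (S.prod.E_pair (VA.E_id _) he) := by
  have h := S.G_map a e
  rw [S.G.map_eq_of_E e he,
    S.F.map_eq_of_E ((𝟙 (L₁.obj a), e) : (L₁.obj a, b) ⟶ (L₁.obj a, b'))
      (S.prod.E_pair (VA.E_id _) he),
    S.W_η_congr (VB.sObj_of_E e he) a, S.W_η_congr (VB.tObj_of_E e he) a] at h
  rw [← cancel_epi (eqToHom ((S.G_obj (VB.sObj e)).symm.trans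
      (congrArg S.G.obj (VB.sObj_of_E e he)))),
    ← cancel_mono (eqToHom ((S.Fb_obj (L₁.obj a) b').symm.trans
      (congrArg (fun c => (S.Fb c).obj (L₁.obj a)) (VB.tObj_of_E e he).symm)))]
  simpa only [Category.assoc, eqToHom_trans, eqToHom_trans_assoc, eqToHom_refl,
    Category.id_comp, Category.comp_id] using h

lemma G_mmap_comp_η {b b' : B} (m : b ⟶ b') (hm : VB.M m) (a : R₁) :
    S.G.mmap m hm ≫ eqToHom (S.G_obj b) ≫ (S.W b).η a ≫ eqToHom (S.Fb_obj (L₁.obj a) b) =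
      eqToHom (S.G_obj b') ≫ (S.W b').η a ≫ eqToHom (S.Fb_obj (L₁.obj a) b') ≫
        S.F.mmap (𝟙 (L₁.obj a), m) (S.prod.M_pair (VA.M_id _) hm) := by
  have h := S.G_map a m
  rw [S.G.map_eq_of_M m hm,
    S.F.map_eq_of_M ((𝟙 (L₁.obj a), m) : (L₁.obj a, b) ⟶ (L₁.obj a, b'))
      (S.prod.M_pair (VA.M_id _) hm),
    S.W_η_congr (VB.sObj_of_M m hm) a, S.W_η_congr (VB.tObj_of_M m hm) a] at h
  rw [← cancel_epi (eqToHom ((S.G_obj (VB.sObj m)).symm.trans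
      (congrArg S.G.obj (VB.sObj_of_M m hm)))),
    ← cancel_mono (eqToHom ((S.Fb_obj (L₁.obj a) b).symm.trans
      (congrArg (fun c => (S.Fb c).obj (L₁.obj a)) (VB.tObj_of_M m hm).symm)))]
  simpa only [Category.assoc, eqToHom_trans, eqToHom_trans_assoc, eqToHom_refl,
    Category.id_comp, Category.comp_id] using h

lemma W_nat (b : B) {x x' : R₁} (f : x ⟶ x') :
    (S.W b).η x ≫ eqToHom (S.Fb_obj (L₁.obj x) b) ≫
        S.F.emap ((VA.te (L₁.map f), 𝟙 b) : ((L₁.obj x, b) : A × B) ⟶ (VA.tObj (L₁.map f), b))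
          (S.prod.E_pair (VA.te_mem _) (VB.E_id b)) =
      (S.W b).η x' ≫ eqToHom (S.Fb_obj (L₁.obj x') b) ≫
        S.F.mmap ((VA.tm (L₁.map f), 𝟙 b) : ((VA.tObj (L₁.map f), b) : A × B) ⟶ (L₁.obj x', b))
          (S.prod.M_pair (VA.tm_mem _) (VB.M_id b)) := by
  have h := (S.W b).nat_emap f
  rw [S.Fb_emap _ (VA.te_mem (L₁.map f)) b, S.Fb_mmap _ (VA.tm_mem (L₁.map f)) b] at h
  simp only [← Category.assoc] at h
  simpa only [Category.assoc] using (cancel_mono _).1 h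

/-- `θ̃_(x,y) = ω^(L₂ y)_x ∘ θ_y`. -/
def transposeη (Θ : Wedge VB S.G L₂) (p : R₁ × R₂) : Θ.pt ⟶ S.F.obj ((L₁.prod L₂).obj p) :=
  Θ.η p.2 ≫ eqToHom (S.G_obj (L₂.obj p.2)) ≫ (S.W (L₂.obj p.2)).η p.1 ≫
    eqToHom (S.Fb_obj (L₁.obj p.1) (L₂.obj p.2))

/-- The wedge condition at `(f, g)` splits into the row condition of `ω`, the interchange of
`(f^m, 𝟙)` with `(𝟙, g^e)`, and the wedge condition of `θ` at `g`. -/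
def transpose (Θ : Wedge VB S.G L₂) : Wedge Vp S.F (L₁.prod L₂) :=
  Wedge.mk' Θ.pt (S.transposeη Θ)
    (by
      rintro ⟨x, y⟩ ⟨x', y'⟩ ⟨f, g⟩
      refine (S.prod.prod_nat_iff S.F (S.transposeη Θ) f g).2 ?_
      simp only [transposeη, Category.assoc]
      rw [S.prod.emap_pair_eq_fst_comp_snd S.F (VA.te_mem _) (VB.te_mem _),
        reassoc_of% (S.W_nat (L₂.obj y) f),
        S.prod.mmap_fst_comp_emap_snd S.F (VA.tm_mem _) (VB.te_mem _),
        ← reassoc_of% (S.G_emap_comp_η _ (VB.te_mem _) x'), reassoc_of% (Θ.nat_emap g),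
        reassoc_of% (S.G_mmap_comp_η _ (VB.tm_mem _) x'),
        ← S.prod.mmap_pair_eq_snd_comp_fst S.F (VA.tm_mem _) (VB.tm_mem _)])

def shiftedColumn (Ω : Wedge Vp S.F (L₁.prod L₂)) (y : R₂) {b : B}
    (ε : L₂.obj y ⟶ b) (hε : VB.E ε) : Wedge VA (S.Fb b) L₁ :=
  Wedge.mk' Ω.pt
    (fun x => Ω.η (x, y) ≫
      S.F.emap ((𝟙 (L₁.obj x), ε) : ((L₁.obj x, L₂.obj y) : A × B) ⟶ (L₁.obj x, b))
        (S.prod.E_pair (VA.E_id _) hε) ≫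
      eqToHom (S.Fb_obj (L₁.obj x) b).symm)
    (by
      intro x x' f
      rw [S.Fb_emap _ (VA.te_mem (L₁.map f)) b, S.Fb_mmap _ (VA.tm_mem (L₁.map f)) b]
      simp only [Category.assoc, eqToHom_trans_assoc, eqToHom_refl, Category.id_comp]
      rw [← reassoc_of% (S.prod.emap_pair_eq_snd_comp_fst S.F (VA.te_mem (L₁.map f)) hε),
        reassoc_of% (S.prod.emap_pair_eq_fst_comp_snd S.F (VA.te_mem (L₁.map f)) hε),
        reassoc_of% (S.prod.wedge_nat_fst S.F Ω f y),
        reassoc_of% (S.prod.mmap_fst_comp_emap_snd S.F (VA.tm_mem (L₁.map f)) hε)])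

def column (Ω : Wedge Vp S.F (L₁.prod L₂)) (y : R₂) : Wedge VA (S.Fb (L₂.obj y)) L₁ :=
  Wedge.mk' Ω.pt (fun x => Ω.η (x, y) ≫ eqToHom (S.Fb_obj (L₁.obj x) (L₂.obj y)).symm)
    (fun {x x'} f => by
      have h := (S.shiftedColumn Ω y (𝟙 (L₂.obj y)) (VB.E_id _)).nat_emap f
      simp only [shiftedColumn, Wedge.mk'_η] at h
      rw [S.F.emap_pair_id (L₁.obj x), S.F.emap_pair_id (L₁.obj x')] at h
      simpa using h)

noncomputable def columnLift (Ω : Wedge Vp S.F (L₁.prod L₂)) (y : R₂) :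
    Ω.pt ⟶ (S.W (L₂.obj y)).pt :=
  ((S.W_isTerminal (L₂.obj y)).some.from (S.column Ω y)).1

lemma columnLift_η (Ω : Wedge Vp S.F (L₁.prod L₂)) (y : R₂) (x : R₁) :
    S.columnLift Ω y ≫ (S.W (L₂.obj y)).η x =
      Ω.η (x, y) ≫ eqToHom (S.Fb_obj (L₁.obj x) (L₂.obj y)).symm :=
  ((S.W_isTerminal (L₂.obj y)).some.from (S.column Ω y)).2 x

lemma eq_columnLift (Ω : Wedge Vp S.F (L₁.prod L₂)) (y : R₂) (v : Ω.pt ⟶ (S.W (L₂.obj y)).pt)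
    (hv : ∀ x, v ≫ (S.W (L₂.obj y)).η x =
      Ω.η (x, y) ≫ eqToHom (S.Fb_obj (L₁.obj x) (L₂.obj y)).symm) :
    v = S.columnLift Ω y :=
  congrArg Subtype.val ((S.W_isTerminal (L₂.obj y)).some.hom_ext
    (⟨v, hv⟩ : S.column Ω y ⟶ S.W (L₂.obj y)) _)

lemma columnLift_emap_comp_η (Ω : Wedge Vp S.F (L₁.prod L₂)) {y y' : R₂} (g : y ⟶ y')
    (x : R₁) :
    (S.columnLift Ω y ≫ eqToHom (S.G_obj (L₂.obj y)).symm ≫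
        S.G.emap (VB.te (L₂.map g)) (VB.te_mem _) ≫ eqToHom (S.G_obj (VB.tObj (L₂.map g)))) ≫
        (S.W (VB.tObj (L₂.map g))).η x =
      Ω.η (x, y) ≫ S.F.emap ((𝟙 (L₁.obj x), VB.te (L₂.map g)) :
          ((L₁.obj x, L₂.obj y) : A × B) ⟶ (L₁.obj x, VB.tObj (L₂.map g)))
        (S.prod.E_pair (VA.E_id _) (VB.te_mem _)) ≫
        eqToHom (S.Fb_obj (L₁.obj x) (VB.tObj (L₂.map g))).symm := by
  rw [← cancel_mono (eqToHom (S.Fb_obj (L₁.obj x) (VB.tObj (L₂.map g))))]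
  simp only [Category.assoc]
  rw [S.G_emap_comp_η _ (VB.te_mem _) x]
  simp only [eqToHom_trans_assoc, eqToHom_refl, Category.id_comp]
  rw [reassoc_of% (S.columnLift_η Ω y x)]
  simp

lemma columnLift_mmap_comp_η (Ω : Wedge Vp S.F (L₁.prod L₂)) {y y' : R₂} (g : y ⟶ y')
    (x : R₁) :
    (S.columnLift Ω y' ≫ eqToHom (S.G_obj (L₂.obj y')).symm ≫
        S.G.mmap (VB.tm (L₂.map g)) (VB.tm_mem _) ≫ eqToHom (S.G_obj (VB.tObj (L₂.map g)))) ≫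
        (S.W (VB.tObj (L₂.map g))).η x =
      Ω.η (x, y) ≫ S.F.emap ((𝟙 (L₁.obj x), VB.te (L₂.map g)) :
          ((L₁.obj x, L₂.obj y) : A × B) ⟶ (L₁.obj x, VB.tObj (L₂.map g)))
        (S.prod.E_pair (VA.E_id _) (VB.te_mem _)) ≫
        eqToHom (S.Fb_obj (L₁.obj x) (VB.tObj (L₂.map g))).symm := by
  rw [← cancel_mono (eqToHom (S.Fb_obj (L₁.obj x) (VB.tObj (L₂.map g))))]
  simp only [Category.assoc]
  rw [S.G_mmap_comp_η _ (VB.tm_mem _) x]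
  simp only [eqToHom_trans_assoc, eqToHom_refl, Category.id_comp]
  rw [reassoc_of% (S.columnLift_η Ω y' x)]
  simp only [eqToHom_trans_assoc, eqToHom_refl, Category.id_comp]
  rw [← S.prod.wedge_nat_snd S.F Ω x g]
  simp

/-- Both sides of the wedge condition at `g` factor the same `L₁`-wedge through the terminal
wedge `ω`. -/
noncomputable def untranspose (Ω : Wedge Vp S.F (L₁.prod L₂)) : Wedge VB S.G L₂ :=
  Wedge.mk' Ω.pt (fun y => S.columnLift Ω y ≫ eqToHom (S.G_obj (L₂.obj y)).symm)
    (by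
      intro y y' g
      have h := congrArg Subtype.val ((S.W_isTerminal (VB.tObj (L₂.map g))).some.hom_ext
        (⟨_, S.columnLift_emap_comp_η Ω g⟩ :
          S.shiftedColumn Ω y (VB.te (L₂.map g)) (VB.te_mem _) ⟶ S.W (VB.tObj (L₂.map g)))
        ⟨_, S.columnLift_mmap_comp_η Ω g⟩)
      rw [← cancel_mono (eqToHom (S.G_obj (VB.tObj (L₂.map g))))]
      simp only [Category.assoc]
      exact h)

lemma untranspose_transpose (Θ : Wedge VB S.G L₂) : S.untranspose (S.transpose Θ) = Θ :=
  Wedge.ext_heq rfl fun y => heq_of_eq <| by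
    have hu : Θ.η y ≫ eqToHom (S.G_obj (L₂.obj y)) = S.columnLift (S.transpose Θ) y :=
      S.eq_columnLift (S.transpose Θ) y (Θ.η y ≫ eqToHom (S.G_obj (L₂.obj y))) fun x => by
        simp [transpose, transposeη]
    exact (comp_eqToHom_iff _ _ _).2 hu.symm

lemma transpose_untranspose (Ω : Wedge Vp S.F (L₁.prod L₂)) :
    S.transpose (S.untranspose Ω) = Ω :=
  Wedge.ext_heq rfl fun ⟨x, y⟩ => heq_of_eq <| by
    simp [transpose, transposeη, untranspose, reassoc_of% (S.columnLift_η Ω y x)]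

def transposeFunctor : Wedge VB S.G L₂ ⥤ Wedge Vp S.F (L₁.prod L₂) where
  obj := S.transpose
  map σ := ⟨σ.1, fun ⟨x, y⟩ => by simp [transpose, transposeη, reassoc_of% (σ.2 y)]⟩

noncomputable def untransposeFunctor : Wedge Vp S.F (L₁.prod L₂) ⥤ Wedge VB S.G L₂ where
  obj := S.untranspose
  map {Ω₁ Ω₂} σ := ⟨σ.1, fun y => by
    have hu : σ.1 ≫ S.columnLift Ω₂ y = S.columnLift Ω₁ y :=
      S.eq_columnLift Ω₁ y _ fun x => by
        rw [Category.assoc, S.columnLift_η, reassoc_of% (σ.2 (x, y))]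
    simp [untranspose, reassoc_of% hu]⟩

lemma transposeFunctor_comp_untransposeFunctor :
    S.transposeFunctor ⋙ S.untransposeFunctor = 𝟭 (Wedge VB S.G L₂) :=
  CategoryTheory.Functor.hext S.untranspose_transpose fun _ _ _ =>
    Wedge.hom_heq (S.untranspose_transpose _) (S.untranspose_transpose _) .rfl

lemma untransposeFunctor_comp_transposeFunctor :
    S.untransposeFunctor ⋙ S.transposeFunctor = 𝟭 (Wedge Vp S.F (L₁.prod L₂)) :=
  CategoryTheory.Functor.hext S.transpose_untranspose fun _ _ _ =>
    Wedge.hom_heq (S.transpose_untranspose _) (S.transpose_untranspose _) .rfl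

end FubiniData

open CategoryTheory.Limits

/-- Fubini theorem for ends: with `Vp` the product variance on `A × B` (componentwise, as
recorded by `hE, hM, hsp, htp`), `Fb b` the partial functor `F^b` (recorded by
`hFobj, hFmap`), `W b` a terminal `L₁`-wedge computing `∫_{L₁}F^b`, and
`G = ∫_{L₁}F : B ⥤ C` the parameter functor of variance (recorded by `hGobj, hGmap`),
the transposition `(c, θ) ↦ (c, θ̃)` with `θ̃_{(x,y)} = ω^{L₂ y}_x ∘ θ_y` is an isomorphism
between the category of `L₂`-wedges of `∫_{L₁}F` and the category of `(L₁ × L₂)`-wedges of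
`F`; in particular `∫_{L₁×L₂}F` exists iff `∫_{L₂}∫_{L₁}F` exists, and they agree. -/
theorem fubini {A : Type u} [Category.{v} A] {B : Type u} [Category.{v} B]
    {CC : Type u₂} [Category.{v₂} CC]
    (VA : Variance A) (VB : Variance B) (Vp : Variance (A × B))
    (hE : ∀ {p q : A × B} (φ : p ⟶ q), Vp.E φ ↔ VA.E φ.1 ∧ VB.E φ.2)
    (hM : ∀ {p q : A × B} (φ : p ⟶ q), Vp.M φ ↔ VA.M φ.1 ∧ VB.M φ.2)
    (hsp : ∀ {p q : A × B} (φ : p ⟶ q), Vp.sObj φ = (VA.sObj φ.1, VB.sObj φ.2))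
    (htp : ∀ {p q : A × B} (φ : p ⟶ q), Vp.tObj φ = (VA.tObj φ.1, VB.tObj φ.2))
    (F : VFunctor Vp CC)
    {R₁ : Type u₃} [Category.{v₃} R₁] (L₁ : R₁ ⥤ A)
    {R₂ : Type u₃} [Category.{v₃} R₂] (L₂ : R₂ ⥤ B)
    (Fb : B → VFunctor VA CC)
    (hFobj : ∀ (a : A) (b : B), (Fb b).obj a = F.obj (a, b))
    (hFmap : ∀ {a a' : A} (f : a ⟶ a') (b : B),
      (Fb b).map f =
        eqToHom (by rw [hFobj, hsp ((f, 𝟙 b) : (a, b) ⟶ (a', b)), VB.sObj_id]) ≫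
          F.map ((f, 𝟙 b) : (a, b) ⟶ (a', b)) ≫
          eqToHom (by rw [hFobj, htp ((f, 𝟙 b) : (a, b) ⟶ (a', b)), VB.tObj_id]))
    (W : ∀ b : B, Wedge VA (Fb b) L₁)
    (hW : ∀ b : B, Nonempty (IsTerminal (W b)))
    (G : VFunctor VB CC)
    (hGobj : ∀ b : B, G.obj b = (W b).pt)
    (hGmap : ∀ (a : R₁) {b b' : B} (g : b ⟶ b'),
      eqToHom (hGobj (VB.sObj g)).symm ≫ G.map g ≫ eqToHom (hGobj (VB.tObj g)) ≫
          (W (VB.tObj g)).η a =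
        (W (VB.sObj g)).η a ≫
          eqToHom (by
            rw [hFobj, hsp ((𝟙 (L₁.obj a), g) : (L₁.obj a, b) ⟶ (L₁.obj a, b')),
              VA.sObj_id]) ≫
          F.map ((𝟙 (L₁.obj a), g) : (L₁.obj a, b) ⟶ (L₁.obj a, b')) ≫
          eqToHom (by
            rw [hFobj, htp ((𝟙 (L₁.obj a), g) : (L₁.obj a, b) ⟶ (L₁.obj a, b')),
              VA.tObj_id])) :
    (∃ (T : Wedge VB G L₂ ⥤ Wedge Vp F (L₁.prod L₂))
        (S' : Wedge Vp F (L₁.prod L₂) ⥤ Wedge VB G L₂),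
      T ⋙ S' = 𝟭 (Wedge VB G L₂) ∧ S' ⋙ T = 𝟭 (Wedge Vp F (L₁.prod L₂)) ∧
      ∃ hpt : ∀ Θ : Wedge VB G L₂, (T.obj Θ).pt = Θ.pt,
        ∀ (Θ : Wedge VB G L₂) (x : R₁) (y : R₂),
          (T.obj Θ).η (x, y) =
            eqToHom (hpt Θ) ≫ Θ.η y ≫ eqToHom (hGobj (L₂.obj y)) ≫
              (W (L₂.obj y)).η x ≫ eqToHom (hFobj (L₁.obj x) (L₂.obj y))) ∧
    ((∃ Θ : Wedge VB G L₂, Nonempty (IsTerminal Θ)) ↔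
      (∃ Ω : Wedge Vp F (L₁.prod L₂), Nonempty (IsTerminal Ω))) := by
  let S : FubiniData CC VA VB Vp L₁ :=
    ⟨⟨hE, hM, hsp, htp⟩, F, Fb, hFobj, hFmap, W, hW, G, hGobj, hGmap⟩
  have h₁ := S.transposeFunctor_comp_untransposeFunctor (L₂ := L₂)
  have h₂ := S.untransposeFunctor_comp_transposeFunctor (L₂ := L₂)
  refine ⟨⟨S.transposeFunctor, S.untransposeFunctor, h₁, h₂, fun _ => rfl, fun Θ x y => ?_⟩,
    (CategoryTheory.Equivalence.mk _ _ (eqToIso h₁.symm) (eqToIso h₂)).exists_isTerminal_iff⟩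
  exact (Category.id_comp _).symm
end

section
/- Parameter theorem: Let A, B be categories with variance, (R₁,L₁) a span on A, and F : A × B → C a functor of variance for the product variance. Assume ∫_{L₁} F^b exists with universal wedge ω^b for every object b of B. Then the assignment b ↦ ∫_{L₁} F^b extends uniquely to a functor of variance ∫_{L₁}F : B → C such that for every object a of R₁ and every morphism g of B, ω^{g_t}_a ∘ (∫_{L₁}F)(g) = F(id_{L₁(a)}, g) ∘ ω^{g_s}_a. -/
open CategoryTheory

universe v u v₂ u₂ v₃ u₃

open CategoryTheory.Limits

/-!
The end `∫_{L₁} F^b` is functorial in `b` because a morphism `g : b ⟶ b'` of `B` acts on wedges: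
postcomposing the universal wedge `ω^{g_s}` with `F(1, g)` gives a wedge on `F^{g_t}`, since
`F(1, g)` commutes with `F(e, 1)` for `e ∈ E` and with `F(m, 1)` for `m ∈ M`. Both interchange
laws hold because each side is `F(e, g)` (resp. `F(m, g)`) by one of the two mixed composition
laws of `F`, evaluated on componentwise factorizations in the product variance. The factorization
of this wedge through `ω^{g_t}` is `(∫_{L₁}F)(g)`. Since the legs of a terminal wedge are jointly
monic, the laws of a functor of variance follow from those of the `F(L₁ a, -)`, and uniqueness
holds.
-/

open CategoryTheory.Prod

namespace Variance

variable {C : Type*} [Category C] (V : Variance C)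

/- Any `SFac` or `TFac` is the chosen factorization (by `s_uniq`, `t_uniq`); stating lemmas for
arbitrary ones avoids transporting morphisms along equalities of objects. -/

structure SFac {X Y : C} (f : X ⟶ Y) where
  obj : C
  m : X ⟶ obj
  e : obj ⟶ Y
  m_mem : V.M m
  e_mem : V.E e
  fac : m ≫ e = f

structure TFac {X Y : C} (f : X ⟶ Y) where
  obj : C
  e : X ⟶ obj
  m : obj ⟶ Y
  e_mem : V.E e
  m_mem : V.M m
  fac : e ≫ m = f

variable {V} {X Y Z : C}

abbrev sFac (f : X ⟶ Y) : V.SFac f :=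
  ⟨_, V.sm f, V.se f, V.sm_mem f, V.se_mem f, V.s_fac f⟩

abbrev tFac (f : X ⟶ Y) : V.TFac f :=
  ⟨_, V.te f, V.tm f, V.te_mem f, V.tm_mem f, V.t_fac f⟩

abbrev sFacOfE {f : X ⟶ Y} (hf : V.E f) : V.SFac f :=
  ⟨X, 𝟙 X, f, V.M_id X, hf, Category.id_comp f⟩

abbrev sFacOfM {f : X ⟶ Y} (hf : V.M f) : V.SFac f :=
  ⟨Y, f, 𝟙 Y, hf, V.E_id Y, Category.comp_id f⟩

abbrev tFacOfE {f : X ⟶ Y} (hf : V.E f) : V.TFac f :=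
  ⟨Y, f, 𝟙 Y, hf, V.M_id Y, Category.comp_id f⟩

abbrev tFacOfM {f : X ⟶ Y} (hf : V.M f) : V.TFac f :=
  ⟨X, 𝟙 X, f, V.E_id X, hf, Category.id_comp f⟩

theorem SFac.eq_sFac {f : X ⟶ Y} (sf : V.SFac f) : sf = V.sFac f := by
  obtain ⟨Z, m, e, hm, he, hf⟩ := sf
  cases V.s_uniq f Z m e hm he hf
  rfl

theorem TFac.eq_tFac {f : X ⟶ Y} (tf : V.TFac f) : tf = V.tFac f := by
  obtain ⟨Z, e, m, he, hm, hf⟩ := tf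
  cases V.t_uniq f Z e m he hm hf
  rfl

theorem SFac.obj_eq {f : X ⟶ Y} (sf : V.SFac f) : sf.obj = V.sObj f := by
  rw [sf.eq_sFac]

theorem TFac.obj_eq {f : X ⟶ Y} (tf : V.TFac f) : tf.obj = V.tObj f := by
  rw [tf.eq_tFac]

def SFac.comp {f : X ⟶ Y} {g : Y ⟶ Z} {k : X ⟶ Z} (sf : V.SFac f) (sg : V.SFac g)
    {mid : sf.obj ⟶ sg.obj} (smid : V.SFac mid) (hmid : sf.e ≫ sg.m = mid) (hk : f ≫ g = k) :
    V.SFac k where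
  obj := smid.obj
  m := sf.m ≫ smid.m
  e := smid.e ≫ sg.e
  m_mem := V.M_comp _ _ sf.m_mem smid.m_mem
  e_mem := V.E_comp _ _ smid.e_mem sg.e_mem
  fac := by
    subst hk hmid
    conv_rhs => rw [← sf.fac, ← sg.fac]
    simp only [Category.assoc, reassoc_of% smid.fac]

def TFac.comp {f : X ⟶ Y} {g : Y ⟶ Z} {k : X ⟶ Z} (tf : V.TFac f) (tg : V.TFac g)
    {mid : tf.obj ⟶ tg.obj} (tmid : V.TFac mid) (hmid : tf.m ≫ tg.e = mid) (hk : f ≫ g = k) :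
    V.TFac k where
  obj := tmid.obj
  e := tf.e ≫ tmid.e
  m := tmid.m ≫ tg.m
  e_mem := V.E_comp _ _ tf.e_mem tmid.e_mem
  m_mem := V.M_comp _ _ tmid.m_mem tg.m_mem
  fac := by
    subst hk hmid
    conv_rhs => rw [← tf.fac, ← tg.fac]
    simp only [Category.assoc, reassoc_of% tmid.fac]

section Map

variable {C' : Type*} [Category C'] {V' : Variance C'} (K : C ⥤ C')
  (hKE : V.E ≤ V'.E.inverseImage K) (hKM : V.M ≤ V'.M.inverseImage K)

def SFac.map {f : X ⟶ Y} (sf : V.SFac f) : V'.SFac (K.map f) where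
  obj := K.obj sf.obj
  m := K.map sf.m
  e := K.map sf.e
  m_mem := hKM _ sf.m_mem
  e_mem := hKE _ sf.e_mem
  fac := by rw [← K.map_comp, sf.fac]

def TFac.map {f : X ⟶ Y} (tf : V.TFac f) : V'.TFac (K.map f) where
  obj := K.obj tf.obj
  e := K.map tf.e
  m := K.map tf.m
  e_mem := hKE _ tf.e_mem
  m_mem := hKM _ tf.m_mem
  fac := by rw [← K.map_comp, tf.fac]

include hKE hKM in
theorem sObj_map (f : X ⟶ Y) : V'.sObj (K.map f) = K.obj (V.sObj f) :=
  ((V.sFac f).map K hKE hKM).obj_eq.symm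

include hKE hKM in
theorem tObj_map (f : X ⟶ Y) : V'.tObj (K.map f) = K.obj (V.tObj f) :=
  ((V.tFac f).map K hKE hKM).obj_eq.symm

end Map

end Variance

namespace VFunctor

variable {C : Type*} [Category C] {V : Variance C} {D : Type*} [Category D]

section MapOf

variable (F : VFunctor V D)

def mapOf {X Y S T : C} (f : X ⟶ Y) (hs : S = V.sObj f) (ht : V.tObj f = T) :
    F.obj S ⟶ F.obj T :=
  eqToHom (congrArg F.obj hs) ≫ F.map f ≫ eqToHom (congrArg F.obj ht)

theorem mapOf_congr {X Y S T : C} {f f' : X ⟶ Y} (h : f = f') (hs : S = V.sObj f)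
    (ht : V.tObj f = T) : F.mapOf f hs ht = F.mapOf f' (h ▸ hs) (h ▸ ht) := by
  subst h; rfl

theorem mapOf_id {X S T : C} (hs : S = V.sObj (𝟙 X)) (ht : V.tObj (𝟙 X) = T) :
    F.mapOf (𝟙 X) hs ht =
      eqToHom (congrArg F.obj (hs.trans ((V.sObj_id X).trans ((V.tObj_id X).symm.trans ht)))) := by
  simp [mapOf, F.map_id]

theorem mapOf_comp₁ {X Y Z S T : C} {f : X ⟶ Y} {g : Y ⟶ Z} {k : X ⟶ Z}
    (sf : V.SFac f) (tf : V.TFac f) (sg : V.SFac g) (tg : V.TFac g)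
    {smid' : sf.obj ⟶ sg.obj} (smid : V.SFac smid') (hsmid : sf.e ≫ sg.m = smid')
    {tmid' : tf.obj ⟶ tg.obj} (tmid : V.TFac tmid') (htmid : tf.m ≫ tg.e = tmid')
    (hk : f ≫ g = k) (hs : S = V.sObj k) (ht : V.tObj k = T) :
    F.mapOf k hs ht =
      F.mapOf smid.m (hs.trans ((sf.comp sg smid hsmid hk).obj_eq.symm.trans
          (V.sObj_of_M _ smid.m_mem).symm)) (V.tObj_of_M _ smid.m_mem) ≫
        F.mapOf f sf.obj_eq tf.obj_eq.symm ≫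
        F.mapOf tmid.e (V.sObj_of_E _ tmid.e_mem).symm
          ((V.tObj_of_E _ tmid.e_mem).trans ((tf.comp tg tmid htmid hk).obj_eq.trans ht)) := by
  obtain rfl := sf.eq_sFac
  obtain rfl := tf.eq_tFac
  obtain rfl := sg.eq_sFac
  obtain rfl := tg.eq_tFac
  subst hsmid htmid hk hs ht
  obtain rfl := smid.eq_sFac
  obtain rfl := tmid.eq_tFac
  simp [mapOf, F.map_comp₁ f g]

theorem mapOf_comp₂ {X Y Z S T : C} {f : X ⟶ Y} {g : Y ⟶ Z} {k : X ⟶ Z}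
    (sf : V.SFac f) (tf : V.TFac f) (sg : V.SFac g) (tg : V.TFac g)
    {smid' : sf.obj ⟶ sg.obj} (smid : V.SFac smid') (hsmid : sf.e ≫ sg.m = smid')
    {tmid' : tf.obj ⟶ tg.obj} (tmid : V.TFac tmid') (htmid : tf.m ≫ tg.e = tmid')
    (hk : f ≫ g = k) (hs : S = V.sObj k) (ht : V.tObj k = T) :
    F.mapOf k hs ht =
      F.mapOf smid.e (hs.trans ((sf.comp sg smid hsmid hk).obj_eq.symm.trans
          (V.sObj_of_E _ smid.e_mem).symm)) (V.tObj_of_E _ smid.e_mem) ≫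
        F.mapOf g sg.obj_eq tg.obj_eq.symm ≫
        F.mapOf tmid.m (V.sObj_of_M _ tmid.m_mem).symm
          ((V.tObj_of_M _ tmid.m_mem).trans ((tf.comp tg tmid htmid hk).obj_eq.trans ht)) := by
  obtain rfl := sf.eq_sFac
  obtain rfl := tf.eq_tFac
  obtain rfl := sg.eq_sFac
  obtain rfl := tg.eq_tFac
  subst hsmid htmid hk hs ht
  obtain rfl := smid.eq_sFac
  obtain rfl := tmid.eq_tFac
  simp [mapOf, F.map_comp₂ f g]

end MapOf

theorem ext : ∀ {G G' : VFunctor V D} (hobj : ∀ X, G.obj X = G'.obj X),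
    (∀ {X Y : C} (f : X ⟶ Y),
      G.map f = eqToHom (hobj _) ≫ G'.map f ≫ eqToHom (hobj _).symm) → G = G'
  | ⟨obj, map, _, _, _⟩, ⟨obj', map', _, _, _⟩, hobj, hmap => by
    obtain rfl : obj = obj' := funext hobj
    obtain rfl : @map = @map' := by
      funext X Y f
      simpa using hmap f
    rfl

section Precomp

variable {C' : Type*} [Category C'] {V' : Variance C'} (F : VFunctor V' D) (K : C ⥤ C')
  (hKE : V.E ≤ V'.E.inverseImage K) (hKM : V.M ≤ V'.M.inverseImage K)

def precomp : VFunctor V D where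
  obj X := F.obj (K.obj X)
  map f := F.mapOf (K.map f) (V.sObj_map K hKE hKM f).symm (V.tObj_map K hKE hKM f)
  map_id X := by
    rw [F.mapOf_congr (K.map_id X), mapOf_id]
    simp
  map_comp₁ f g := by
    rw [F.mapOf_congr (K.map_comp f g),
      F.mapOf_comp₁ ((V.sFac f).map K hKE hKM) ((V.tFac f).map K hKE hKM)
        ((V.sFac g).map K hKE hKM) ((V.tFac g).map K hKE hKM)
        ((V.sFac _).map K hKE hKM) (K.map_comp _ _).symm
        ((V.tFac _).map K hKE hKM) (K.map_comp _ _).symm rfl]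
    dsimp only [Variance.SFac.map, Variance.TFac.map]
    simp [mapOf]
  map_comp₂ f g := by
    rw [F.mapOf_congr (K.map_comp f g),
      F.mapOf_comp₂ ((V.sFac f).map K hKE hKM) ((V.tFac f).map K hKE hKM)
        ((V.sFac g).map K hKE hKM) ((V.tFac g).map K hKE hKM)
        ((V.sFac _).map K hKE hKM) (K.map_comp _ _).symm
        ((V.tFac _).map K hKE hKM) (K.map_comp _ _).symm rfl]
    dsimp only [Variance.SFac.map, Variance.TFac.map]
    simp [mapOf]

theorem precomp_map {X Y : C} (f : X ⟶ Y) :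
    (F.precomp K hKE hKM).map f =
      F.mapOf (K.map f) (V.sObj_map K hKE hKM f).symm (V.tObj_map K hKE hKM f) :=
  rfl

theorem precomp_mapOf {X Y S T : C} (f : X ⟶ Y) (hs : S = V.sObj f) (ht : V.tObj f = T) :
    (F.precomp K hKE hKM).mapOf f hs ht =
      F.mapOf (K.map f) ((congrArg K.obj hs).trans (V.sObj_map K hKE hKM f).symm)
        ((V.tObj_map K hKE hKM f).trans (congrArg K.obj ht)) := by
  subst hs ht
  rw [mapOf, precomp_map]
  simp only [mapOf, eqToHom_refl, Category.id_comp]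
  exact Category.comp_id _

end Precomp

end VFunctor

section Product

variable {A : Type*} [Category A] {B : Type*} [Category B] {D : Type*} [Category D]
  {VA : Variance A} {VB : Variance B} {Vp : Variance (A × B)}
  (hE : ∀ {p q : A × B} (φ : p ⟶ q), Vp.E φ ↔ VA.E φ.1 ∧ VB.E φ.2)
  (hM : ∀ {p q : A × B} (φ : p ⟶ q), Vp.M φ ↔ VA.M φ.1 ∧ VB.M φ.2)

abbrev Variance.SFac.prod {a a' : A} {b b' : B} {f : a ⟶ a'} {g : b ⟶ b'} (sf : VA.SFac f)
    (sg : VB.SFac g) : Vp.SFac (f ×ₘ g) where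
  obj := (sf.obj, sg.obj)
  m := sf.m ×ₘ sg.m
  e := sf.e ×ₘ sg.e
  m_mem := (hM _).2 ⟨sf.m_mem, sg.m_mem⟩
  e_mem := (hE _).2 ⟨sf.e_mem, sg.e_mem⟩
  fac := by simp [sf.fac, sg.fac]

abbrev Variance.TFac.prod {a a' : A} {b b' : B} {f : a ⟶ a'} {g : b ⟶ b'} (tf : VA.TFac f)
    (tg : VB.TFac g) : Vp.TFac (f ×ₘ g) where
  obj := (tf.obj, tg.obj)
  e := tf.e ×ₘ tg.e
  m := tf.m ×ₘ tg.m
  e_mem := (hE _).2 ⟨tf.e_mem, tg.e_mem⟩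
  m_mem := (hM _).2 ⟨tf.m_mem, tg.m_mem⟩
  fac := by simp [tf.fac, tg.fac]

include hE hM in
theorem Variance.sObj_prod {a a' : A} {b b' : B} (f : a ⟶ a') (g : b ⟶ b') :
    Vp.sObj (f ×ₘ g) = (VA.sObj f, VB.sObj g) :=
  ((VA.sFac f).prod hE hM (VB.sFac g)).obj_eq.symm

include hE hM in
theorem Variance.tObj_prod {a a' : A} {b b' : B} (f : a ⟶ a') (g : b ⟶ b') :
    Vp.tObj (f ×ₘ g) = (VA.tObj f, VB.tObj g) :=
  ((VA.tFac f).prod hE hM (VB.tFac g)).obj_eq.symm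

namespace VFunctor

variable (F : VFunctor Vp D)

/-- The partial functor `F^b = F(-, b)`. -/
abbrev sectL (b : B) : VFunctor VA D where
  __ := F.precomp (Prod.sectL A b) (fun _ _ _ hf => (hE _).2 ⟨hf, VB.E_id b⟩)
    (fun _ _ _ hf => (hM _).2 ⟨hf, VB.M_id b⟩)
  obj a := F.obj (a, b)

abbrev sectR (a : A) : VFunctor VB D where
  __ := F.precomp (Prod.sectR a B) (fun _ _ _ hg => (hE _).2 ⟨VA.E_id a, hg⟩)
    (fun _ _ _ hg => (hM _).2 ⟨VA.M_id a, hg⟩)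
  obj b := F.obj (a, b)

theorem sectL_map {a a' : A} (f : a ⟶ a') (b : B) :
    (F.sectL hE hM b).map f =
      F.mapOf (f ×ₘ 𝟙 b) (by rw [Variance.sObj_prod hE hM, VB.sObj_id])
        (by rw [Variance.tObj_prod hE hM, VB.tObj_id]) :=
  rfl

theorem sectL_mapOf {a a' S T : A} (f : a ⟶ a') (b : B) (hs : S = VA.sObj f)
    (ht : VA.tObj f = T) :
    (F.sectL hE hM b).mapOf f hs ht =
      F.mapOf (f ×ₘ 𝟙 b) (by rw [Variance.sObj_prod hE hM, VB.sObj_id, hs])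
        (by rw [Variance.tObj_prod hE hM, VB.tObj_id, ht]) :=
  F.precomp_mapOf (Prod.sectL A b) (fun _ _ _ hf => (hE _).2 ⟨hf, VB.E_id b⟩)
    (fun _ _ _ hf => (hM _).2 ⟨hf, VB.M_id b⟩) f hs ht

theorem sectR_map (a : A) {b b' : B} (g : b ⟶ b') :
    (F.sectR hE hM a).map g =
      F.mapOf (𝟙 a ×ₘ g) (by rw [Variance.sObj_prod hE hM, VA.sObj_id])
        (by rw [Variance.tObj_prod hE hM, VA.tObj_id]) :=
  rfl

theorem interchange_E {a₁ a₂ : A} {e : a₁ ⟶ a₂} (he : VA.E e) {b b' : B} (g : b ⟶ b') :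
    (F.sectL hE hM (VB.sObj g)).mapOf e (VA.sObj_of_E e he).symm (VA.tObj_of_E e he) ≫
        (F.sectR hE hM a₂).map g =
      (F.sectR hE hM a₁).map g ≫
        (F.sectL hE hM (VB.tObj g)).mapOf e (VA.sObj_of_E e he).symm (VA.tObj_of_E e he) := by
  have hE₁ : ∀ b : B, Vp.E (e ×ₘ 𝟙 b) := fun b => (hE _).2 ⟨he, VB.E_id b⟩
  have hE₂ : ∀ {b b' : B} {g : b ⟶ b'}, VB.E g → ∀ a : A, Vp.E (𝟙 a ×ₘ g) :=
    fun hg a => (hE _).2 ⟨VA.E_id a, hg⟩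
  rw [sectL_mapOf, sectL_mapOf, sectR_map, sectR_map]
  calc _ = F.mapOf (e ×ₘ g) ((VA.sFacOfE he).prod hE hM (VB.sFac g)).obj_eq
        ((VA.tFacOfE he).prod hE hM (VB.tFac g)).obj_eq.symm := by
        rw [F.mapOf_comp₂ (Vp.sFacOfE (hE₁ b)) (Vp.tFacOfE (hE₁ b))
          ((VA.sFacOfE (VA.E_id a₂)).prod hE hM (VB.sFac g))
          ((VA.tFacOfE (VA.E_id a₂)).prod hE hM (VB.tFac g))
          ((VA.sFacOfE he).prod hE hM (VB.sFacOfM (VB.sm_mem g))) (by simp)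
          (Vp.tFacOfE (hE₂ (VB.te_mem g) a₂)) (by simp) (by simp), mapOf_id]
        simp
    _ = _ := by
        rw [F.mapOf_comp₁ ((VA.sFacOfE (VA.E_id a₁)).prod hE hM (VB.sFac g))
          ((VA.tFacOfE (VA.E_id a₁)).prod hE hM (VB.tFac g))
          (Vp.sFacOfE (hE₁ b')) (Vp.tFacOfE (hE₁ b'))
          (Vp.sFacOfE (hE₂ (VB.se_mem g) a₁)) (by simp)
          ((VA.tFacOfE he).prod hE hM (VB.tFacOfM (VB.tm_mem g))) (by simp) (by simp), mapOf_id]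
        simp

theorem interchange_M {a₁ a₂ : A} {m : a₁ ⟶ a₂} (hm : VA.M m) {b b' : B} (g : b ⟶ b') :
    (F.sectL hE hM (VB.sObj g)).mapOf m (VA.sObj_of_M m hm).symm (VA.tObj_of_M m hm) ≫
        (F.sectR hE hM a₁).map g =
      (F.sectR hE hM a₂).map g ≫
        (F.sectL hE hM (VB.tObj g)).mapOf m (VA.sObj_of_M m hm).symm (VA.tObj_of_M m hm) := by
  have hM₁ : ∀ b : B, Vp.M (m ×ₘ 𝟙 b) := fun b => (hM _).2 ⟨hm, VB.M_id b⟩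
  have hM₂ : ∀ {b b' : B} {g : b ⟶ b'}, VB.M g → ∀ a : A, Vp.M (𝟙 a ×ₘ g) :=
    fun hg a => (hM _).2 ⟨VA.M_id a, hg⟩
  rw [sectL_mapOf, sectL_mapOf, sectR_map, sectR_map]
  calc _ = F.mapOf (m ×ₘ g) ((VA.sFacOfM hm).prod hE hM (VB.sFac g)).obj_eq
        ((VA.tFacOfM hm).prod hE hM (VB.tFac g)).obj_eq.symm := by
        rw [F.mapOf_comp₁ ((VA.sFacOfE (VA.E_id a₁)).prod hE hM (VB.sFac g))
          ((VA.tFacOfE (VA.E_id a₁)).prod hE hM (VB.tFac g))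
          (Vp.sFacOfM (hM₁ b')) (Vp.tFacOfM (hM₁ b'))
          ((VA.sFacOfM hm).prod hE hM (VB.sFacOfE (VB.se_mem g))) (by simp)
          (Vp.tFacOfM (hM₂ (VB.tm_mem g) a₁)) (by simp) (by simp), mapOf_id]
        simp
    _ = _ := by
        rw [F.mapOf_comp₂ (Vp.sFacOfM (hM₁ b)) (Vp.tFacOfM (hM₁ b))
          ((VA.sFacOfE (VA.E_id a₂)).prod hE hM (VB.sFac g))
          ((VA.tFacOfE (VA.E_id a₂)).prod hE hM (VB.tFac g))
          (Vp.sFacOfM (hM₂ (VB.sm_mem g) a₂)) (by simp)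
          ((VA.tFacOfM hm).prod hE hM (VB.tFacOfE (VB.te_mem g))) (by simp) (by simp), mapOf_id]
        simp

end VFunctor

end Product

namespace VFunctor

section Lift

variable {B : Type*} [Category B] {VB : Variance B} {D : Type*} [Category D] {R : Type*}
  {P : R → VFunctor VB D} {G₀ : B → D} {ω : ∀ b x, G₀ b ⟶ (P x).obj b}
  (hω : ∀ b {Z : D} (u u' : Z ⟶ G₀ b), (∀ x, u ≫ ω b x = u' ≫ ω b x) → u = u')
  (hlift : ∀ {b b' : B} (g : b ⟶ b'),
    ∃ u : G₀ (VB.sObj g) ⟶ G₀ (VB.tObj g), ∀ x, u ≫ ω _ x = ω _ x ≫ (P x).map g)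

theorem eqToHom_comp_leg {b b' : B} (h : b = b') (x : R) :
    eqToHom (congrArg G₀ h) ≫ ω b' x = ω b x ≫ eqToHom (congrArg (P x).obj h) := by
  subst h; simp

theorem eqToHom_comp_leg_assoc {b b' : B} (h : b = b') (x : R) {Z : D}
    (k : (P x).obj b' ⟶ Z) :
    eqToHom (congrArg G₀ h) ≫ ω b' x ≫ k =
      ω b x ≫ eqToHom (congrArg (P x).obj h) ≫ k := by
  subst h; simp

theorem choose_comp_leg_assoc {b b' : B} (g : b ⟶ b') (x : R) {Z : D}
    (k : (P x).obj (VB.tObj g) ⟶ Z) :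
    (hlift g).choose ≫ ω _ x ≫ k = ω _ x ≫ (P x).map g ≫ k := by
  rw [← Category.assoc, (hlift g).choose_spec, Category.assoc]

/- Each law is checked against the legs `ω _ x`; the side goals left by `rw` are the
identifications of objects occurring in the law. -/
noncomputable abbrev lift : VFunctor VB D where
  obj := G₀
  map g := (hlift g).choose
  map_id X := hω _ _ _ fun x => by
    rw [(hlift _).choose_spec, (P x).map_id, Category.assoc, eqToHom_comp_leg,
      eqToHom_comp_leg_assoc]
    all_goals simp only [VB.sObj_id, VB.tObj_id]
  map_comp₁ f g := hω _ _ _ fun x => by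
    simp only [Category.assoc]
    rw [eqToHom_comp_leg, choose_comp_leg_assoc, eqToHom_comp_leg_assoc, choose_comp_leg_assoc,
      eqToHom_comp_leg_assoc, choose_comp_leg_assoc, eqToHom_comp_leg_assoc,
      (hlift _).choose_spec, (P x).map_comp₁]
    all_goals simp only [VB.sObj_comp f g, VB.tObj_comp f g, VB.sObj_of_M _ (VB.sm_mem _),
      VB.tObj_of_M _ (VB.sm_mem _), VB.sObj_of_E _ (VB.te_mem _), VB.tObj_of_E _ (VB.te_mem _)]
  map_comp₂ f g := hω _ _ _ fun x => by
    simp only [Category.assoc]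
    rw [eqToHom_comp_leg, choose_comp_leg_assoc, eqToHom_comp_leg_assoc, choose_comp_leg_assoc,
      eqToHom_comp_leg_assoc, choose_comp_leg_assoc, eqToHom_comp_leg_assoc,
      (hlift _).choose_spec, (P x).map_comp₂]
    all_goals simp only [VB.sObj_comp f g, VB.tObj_comp f g, VB.sObj_of_E _ (VB.se_mem _),
      VB.tObj_of_E _ (VB.se_mem _), VB.sObj_of_M _ (VB.tm_mem _), VB.tObj_of_M _ (VB.tm_mem _)]

theorem lift_map_comp (x : R) {b b' : B} (g : b ⟶ b') :
    (lift hω hlift).map g ≫ ω _ x = ω _ x ≫ (P x).map g :=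
  (hlift g).choose_spec x

include hω hlift in
theorem existsUnique_lift :
    ∃! G : VFunctor VB D, ∃ h : ∀ b, G.obj b = G₀ b, ∀ (x : R) {b b' : B} (g : b ⟶ b'),
      eqToHom (h (VB.sObj g)).symm ≫ G.map g ≫ eqToHom (h (VB.tObj g)) ≫ ω (VB.tObj g) x =
        ω (VB.sObj g) x ≫ (P x).map g := by
  refine ⟨lift hω hlift,
    ⟨fun _ => rfl, fun x _ _ g => by simpa using lift_map_comp hω hlift x g⟩,
    fun G ⟨hG, hGω⟩ => VFunctor.ext hG fun g => ?_⟩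
  have h := hω _ (eqToHom (hG _).symm ≫ G.map g ≫ eqToHom (hG _)) ((lift hω hlift).map g)
    fun x => by rw [Category.assoc, Category.assoc, hGω, lift_map_comp]
  rw [← h]
  simp

end Lift

end VFunctor

namespace Wedge

variable {A : Type*} [Category A] {D : Type*} [Category D] {V : Variance A} {F : VFunctor V D}
  {R : Type*} [Category R] {L : R ⥤ A} {W : Wedge V F L}

theorem hom_ext (hW : IsTerminal W) {Z : D} {u u' : Z ⟶ W.pt}
    (h : ∀ x, u ≫ W.η x = u' ≫ W.η x) : u = u' :=
  let W' : Wedge V F L :=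
    ⟨Z, fun x => u ≫ W.η x, fun f => by simp only [Category.assoc, W.nat f]⟩
  congrArg Subtype.val (hW.hom_ext (⟨u, fun _ => rfl⟩ : W' ⟶ W) ⟨u', fun x => (h x).symm⟩)

theorem exists_lift (hW : IsTerminal W) (W' : Wedge V F L) :
    ∃ u : W'.pt ⟶ W.pt, ∀ x, u ≫ W.η x = W'.η x :=
  ⟨(hW.from W').1, (hW.from W').2⟩

end Wedge

namespace Wedge

variable {A : Type*} [Category A] {B : Type*} [Category B] {D : Type*} [Category D]
  {VA : Variance A} {VB : Variance B} {Vp : Variance (A × B)}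
  (hE : ∀ {p q : A × B} (φ : p ⟶ q), Vp.E φ ↔ VA.E φ.1 ∧ VB.E φ.2)
  (hM : ∀ {p q : A × B} (φ : p ⟶ q), Vp.M φ ↔ VA.M φ.1 ∧ VB.M φ.2) (F : VFunctor Vp D)
  {R : Type*} [Category R] {L : R ⥤ A}

def postcompose {b b' : B} (g : b ⟶ b') (w : Wedge VA (F.sectL hE hM (VB.sObj g)) L) :
    Wedge VA (F.sectL hE hM (VB.tObj g)) L where
  pt := w.pt
  η x := w.η x ≫ (F.sectR hE hM (L.obj x)).map g
  nat {x y} f := by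
    change (w.η x ≫ _) ≫ (F.sectL hE hM (VB.tObj g)).mapOf (VA.te (L.map f))
        (VA.sObj_of_E _ (VA.te_mem _)).symm (VA.tObj_of_E _ (VA.te_mem _)) =
      (w.η y ≫ _) ≫ (F.sectL hE hM (VB.tObj g)).mapOf (VA.tm (L.map f))
        (VA.sObj_of_M _ (VA.tm_mem _)).symm (VA.tObj_of_M _ (VA.tm_mem _))
    rw [Category.assoc, Category.assoc, ← F.interchange_E hE hM (VA.te_mem _),
      ← F.interchange_M hE hM (VA.tm_mem _), ← Category.assoc, ← Category.assoc]
    exact congrArg (· ≫ _) (w.nat f)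

end Wedge

/-- Parameter theorem: if the end `∫_{L₁} F^b` exists (given by a terminal `L₁`-wedge
`W b` of the partial functor `F^b = F(-, b)`) for every object `b` of `B`, then
`b ↦ ∫_{L₁} F^b` extends uniquely to a functor of variance `∫_{L₁}F : B ⥤ C` such that
`ω^{g_t}_a ∘ (∫_{L₁}F)(g) = F(id_{L₁ a}, g) ∘ ω^{g_s}_a` for every object `a` of `R₁` and
morphism `g` of `B`.  Here `Vp` is the product variance on `A × B` (its factorizations are
computed componentwise, as recorded by `hsp`, `htp`), and `Fb b` is the partial functor
`F^b`, as recorded by `hFobj`, `hFmap`. -/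
theorem parameter_theorem {A : Type u} [Category.{v} A] {B : Type u} [Category.{v} B]
    {CC : Type u₂} [Category.{v₂} CC]
    (VA : Variance A) (VB : Variance B) (Vp : Variance (A × B))
    (hE : ∀ {p q : A × B} (φ : p ⟶ q), Vp.E φ ↔ VA.E φ.1 ∧ VB.E φ.2)
    (hM : ∀ {p q : A × B} (φ : p ⟶ q), Vp.M φ ↔ VA.M φ.1 ∧ VB.M φ.2)
    (hsp : ∀ {p q : A × B} (φ : p ⟶ q), Vp.sObj φ = (VA.sObj φ.1, VB.sObj φ.2))
    (htp : ∀ {p q : A × B} (φ : p ⟶ q), Vp.tObj φ = (VA.tObj φ.1, VB.tObj φ.2))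
    (F : VFunctor Vp CC)
    {R₁ : Type u₃} [Category.{v₃} R₁] (L₁ : R₁ ⥤ A)
    (Fb : B → VFunctor VA CC)
    (hFobj : ∀ (a : A) (b : B), (Fb b).obj a = F.obj (a, b))
    (hFmap : ∀ {a a' : A} (f : a ⟶ a') (b : B),
      (Fb b).map f =
        eqToHom (by rw [hFobj, hsp ((f, 𝟙 b) : (a, b) ⟶ (a', b)), VB.sObj_id]) ≫
          F.map ((f, 𝟙 b) : (a, b) ⟶ (a', b)) ≫
          eqToHom (by rw [hFobj, htp ((f, 𝟙 b) : (a, b) ⟶ (a', b)), VB.tObj_id]))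
    (W : ∀ b : B, Wedge VA (Fb b) L₁)
    (hW : ∀ b : B, Nonempty (IsTerminal (W b))) :
    ∃! G : VFunctor VB CC, ∃ h : ∀ b : B, G.obj b = (W b).pt,
      ∀ (a : R₁) {b b' : B} (g : b ⟶ b'),
        eqToHom (h (VB.sObj g)).symm ≫ G.map g ≫ eqToHom (h (VB.tObj g)) ≫
            (W (VB.tObj g)).η a =
          (W (VB.sObj g)).η a ≫
            eqToHom (by
              rw [hFobj, hsp ((𝟙 (L₁.obj a), g) : (L₁.obj a, b) ⟶ (L₁.obj a, b')),
                VA.sObj_id]) ≫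
            F.map ((𝟙 (L₁.obj a), g) : (L₁.obj a, b) ⟶ (L₁.obj a, b')) ≫
            eqToHom (by
              rw [hFobj, htp ((𝟙 (L₁.obj a), g) : (L₁.obj a, b) ⟶ (L₁.obj a, b')),
                VA.tObj_id]) := by
  obtain rfl : Fb = F.sectL hE hM := funext fun b => VFunctor.ext (hFobj · b) fun f => by
    rw [hFmap, VFunctor.sectL_map]
    simp [VFunctor.mapOf]
  exact VFunctor.existsUnique_lift (P := fun x => F.sectR hE hM (L₁.obj x))
    (fun b _ _ _ => Wedge.hom_ext (hW b).some)
    fun g => Wedge.exists_lift (hW _).some (Wedge.postcompose hE hM F g (W (VB.sObj g)))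
end
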